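/- arXiv:2303.11273 — 7 statements merged into one kernel-verified Lean document; each statement's English description precedes it below -/
import Mathlib

section
/- The map ⟦x, y⟧_{∞} := max over indices i achieving |y_i| = ‖y‖_∞ of y_i x_i is a weak pairing for the ℓ∞ norm on ℝ^n: it is subadditive and continuous in its first argument, weakly homogeneous (⟦αx, y⟧ = ⟦x, αy⟧ = α⟦x, y⟧ for α ≥ 0 and ⟦−x, −y⟧ = ⟦x, y⟧), positive definite (⟦x, x⟧ = ‖x‖_∞² > 0 for x ≠ 0), and satisfies the Cauchy–Schwarz inequality |⟦x, y⟧| ≤ ‖x‖_∞ ‖y‖_∞. -/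
private lemma exists_abs_eq_norm_linf {n : ℕ} (hn : 0 < n) (y : Fin n → ℝ) :
    ∃ i, |y i| = ‖y‖ := by
  have : Nonempty (Fin n) := ⟨⟨0, hn⟩⟩
  obtain ⟨i, -, hi⟩ := Finset.exists_mem_eq_sup Finset.univ Finset.univ_nonempty
    (fun i => ‖y i‖₊)
  refine ⟨i, ?_⟩
  rw [Pi.norm_def, hi]
  simp [Real.norm_eq_abs]

private lemma ciSup_subtype_congr_linf {n : ℕ} {p q : Fin n → Prop}
    [Nonempty {i // p i}] [Nonempty {i // q i}] {f g : Fin n → ℝ}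
    (hpq : ∀ i, p i ↔ q i) (hfg : ∀ i, p i → f i = g i) :
    (⨆ i : {i // p i}, f (i : Fin n)) = ⨆ i : {i // q i}, g (i : Fin n) := by
  apply le_antisymm
  · refine ciSup_le fun i => ?_
    rw [hfg i i.2]
    exact le_ciSup (f := fun j : {i // q i} => g (j : Fin n))
      (Set.Finite.bddAbove (Set.finite_range _)) ⟨i, (hpq i).1 i.2⟩
  · refine ciSup_le fun i => ?_
    rw [← hfg i ((hpq i).2 i.2)]
    exact le_ciSup (f := fun j : {i // p i} => f (j : Fin n))
      (Set.Finite.bddAbove (Set.finite_range _)) ⟨i, (hpq i).2 i.2⟩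

/-- The map `⟦x, y⟧_∞ = max_{i : |y_i| = ‖y‖_∞} y_i x_i` is a weak pairing for
the ℓ∞ norm on ℝⁿ: subadditive and continuous in the first argument, weakly
homogeneous, positive definite (with `⟦x,x⟧ = ‖x‖_∞²`), and satisfies
Cauchy–Schwarz. -/
theorem linf_weak_pairing {n : ℕ} (hn : 0 < n)
    (P : (Fin n → ℝ) → (Fin n → ℝ) → ℝ)
    (hP : ∀ x y : Fin n → ℝ,
      P x y = ⨆ i : {i : Fin n // |y i| = ‖y‖}, y (i : Fin n) * x (i : Fin n)) :
    (∀ x₁ x₂ y : Fin n → ℝ, P (x₁ + x₂) y ≤ P x₁ y + P x₂ y) ∧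
    (∀ y : Fin n → ℝ, Continuous fun x => P x y) ∧
    (∀ α : ℝ, 0 ≤ α → ∀ x y : Fin n → ℝ,
      P (α • x) y = α * P x y ∧ P x (α • y) = α * P x y) ∧
    (∀ x y : Fin n → ℝ, P (-x) (-y) = P x y) ∧
    (∀ x : Fin n → ℝ, P x x = ‖x‖ ^ 2) ∧
    (∀ x : Fin n → ℝ, x ≠ 0 → 0 < P x x) ∧
    (∀ x y : Fin n → ℝ, |P x y| ≤ ‖x‖ * ‖y‖) := by
  have hne : ∀ y : Fin n → ℝ, Nonempty {i : Fin n // |y i| = ‖y‖} := fun y => by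
    obtain ⟨i, hi⟩ := exists_abs_eq_norm_linf hn y
    exact ⟨⟨i, hi⟩⟩
  have hbdd : ∀ (y : Fin n → ℝ) (f : {i : Fin n // |y i| = ‖y‖} → ℝ),
      BddAbove (Set.range f) := fun y f => Set.Finite.bddAbove (Set.finite_range f)
  -- `⟦x,x⟧ = ‖x‖²`
  have hsq : ∀ x : Fin n → ℝ, P x x = ‖x‖ ^ 2 := by
    intro x
    haveI := hne x
    rw [hP]
    have h : (fun i : {i : Fin n // |x i| = ‖x‖} => x (i : Fin n) * x (i : Fin n))
        = fun _ => ‖x‖ ^ 2 := by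
      funext i
      have h1 : x (i : Fin n) * x (i : Fin n) = |x (i : Fin n)| * |x (i : Fin n)| :=
        (abs_mul_abs_self _).symm
      rw [h1, i.2, sq]
    rw [h, ciSup_const]
  refine ⟨?_, ?_, ?_, ?_, hsq, ?_, ?_⟩
  · -- subadditivity
    intro x₁ x₂ y
    haveI := hne y
    rw [hP, hP, hP]
    refine ciSup_le fun i => ?_
    have h : y (i : Fin n) * (x₁ + x₂) (i : Fin n)
        = y (i : Fin n) * x₁ (i : Fin n) + y (i : Fin n) * x₂ (i : Fin n) := by
      simp [mul_add]
    rw [h]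
    exact add_le_add
      (le_ciSup (f := fun j : {i : Fin n // |y i| = ‖y‖} => y (j : Fin n) * x₁ (j : Fin n)) (hbdd y _) i)
      (le_ciSup (f := fun j : {i : Fin n // |y i| = ‖y‖} => y (j : Fin n) * x₂ (j : Fin n)) (hbdd y _) i)
  · -- continuity
    intro y
    haveI := hne y
    haveI : Fintype {i : Fin n // |y i| = ‖y‖} := Fintype.ofFinite _
    have h : (fun x => P x y) = fun x : Fin n → ℝ =>
        Finset.univ.sup' Finset.univ_nonempty
          (fun i : {i : Fin n // |y i| = ‖y‖} => y (i : Fin n) * x (i : Fin n)) := by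
      funext x
      rw [hP, Finset.sup'_univ_eq_ciSup]
    rw [h]
    exact Continuous.finset_sup'_apply _ fun i _ =>
      continuous_const.mul (continuous_apply (i : Fin n))
  · -- homogeneity
    intro α hα x y
    haveI := hne y
    constructor
    · rw [hP, hP, Real.mul_iSup_of_nonneg hα]
      congr 1
      funext i
      simp [smul_eq_mul]
      ring
    · rcases eq_or_lt_of_le hα with h0 | hpos
      · subst h0
        have hy0 : (0 : ℝ) • y = 0 := zero_smul _ _
        rw [hy0, hP]
        haveI := hne (0 : Fin n → ℝ)
        have h : (fun i : {i : Fin n // |(0 : Fin n → ℝ) i| = ‖(0 : Fin n → ℝ)‖} =>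
            (0 : Fin n → ℝ) (i : Fin n) * x (i : Fin n)) = fun _ => 0 := by
          funext i; simp
        rw [h, ciSup_const, zero_mul]
      · rw [hP, hP, Real.mul_iSup_of_nonneg hα]
        haveI : Nonempty {i : Fin n // |(α • y) i| = ‖α • y‖} := hne _
        refine ciSup_subtype_congr_linf
          (f := fun j : Fin n => (α • y) j * x j)
          (g := fun j : Fin n => α * (y j * x j)) (fun i => ?_) (fun i hi => ?_)
        · have hnorm : ‖α • y‖ = α * ‖y‖ := by
            rw [norm_smul, Real.norm_eq_abs, abs_of_nonneg hα]
          have habs : |(α • y) i| = α * |y i| := by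
            simp [abs_mul, abs_of_nonneg hα]
          rw [habs, hnorm]
          exact mul_right_inj' (ne_of_gt hpos)
        · simp [smul_eq_mul]; ring
  · -- negation
    intro x y
    haveI := hne y
    haveI : Nonempty {i : Fin n // |(-y) i| = ‖-y‖} := hne _
    rw [hP, hP]
    refine ciSup_subtype_congr_linf
      (f := fun j : Fin n => (-y) j * (-x) j)
      (g := fun j : Fin n => y j * x j) (fun i => ?_) (fun i hi => ?_)
    · simp
    · simp
  · -- positive definite
    intro x hx
    rw [hsq]
    exact pow_pos (norm_pos_iff.mpr hx) 2
  · -- Cauchy–Schwarz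
    intro x y
    haveI := hne y
    rw [hP]
    have key : ∀ i : {i : Fin n // |y i| = ‖y‖},
        |y (i : Fin n) * x (i : Fin n)| ≤ ‖x‖ * ‖y‖ := by
      intro i
      rw [abs_mul, i.2, mul_comm]
      have := norm_le_pi_norm x (i : Fin n)
      rw [Real.norm_eq_abs] at this
      exact mul_le_mul_of_nonneg_right this (norm_nonneg y) |>.trans_eq rfl
    refine abs_le.mpr ⟨?_, ciSup_le fun i => (le_abs_self _).trans (key i)⟩
    obtain ⟨i⟩ := (inferInstance : Nonempty {i : Fin n // |y i| = ‖y‖})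
    calc -(‖x‖ * ‖y‖) ≤ y (i : Fin n) * x (i : Fin n) :=
          neg_le_of_abs_le (key i)
      _ ≤ _ := le_ciSup (f := fun j : {i : Fin n // |y i| = ‖y‖} => y (j : Fin n) * x (j : Fin n)) (hbdd y _) i
end

section
/- The map ⟦x, y⟧_1 := ‖y‖_1 · (sign(y))ᵀ x is a weak pairing compatible with the ℓ1 norm on ℝ^n; in particular ⟦x, x⟧_1 = ‖x‖_1² and |⟦x, y⟧_1| ≤ ‖x‖_1 ‖y‖_1. -/
lemma sign_mul_self' (a : ℝ) : Real.sign a * a = |a| := by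
  rcases lt_trichotomy a 0 with h | h | h
  · rw [Real.sign_of_neg h, abs_of_neg h]; ring
  · simp [h]
  · rw [Real.sign_of_pos h, abs_of_pos h]; ring

lemma sign_smul_pos' {α : ℝ} (hα : 0 < α) (a : ℝ) :
    Real.sign (α * a) = Real.sign a := by
  rcases lt_trichotomy a 0 with h | h | h
  · rw [Real.sign_of_neg h, Real.sign_of_neg (mul_neg_of_pos_of_neg hα h)]
  · simp [h]
  · rw [Real.sign_of_pos h, Real.sign_of_pos (mul_pos hα h)]

lemma abs_sign_le_one' (a : ℝ) : |Real.sign a| ≤ 1 := by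
  rcases lt_trichotomy a 0 with h | h | h
  · simp [Real.sign_of_neg h]
  · simp [h]
  · simp [Real.sign_of_pos h]

/-- The map `⟦x, y⟧₁ = ‖y‖₁ · sign(y)ᵀ x` is a weak pairing compatible with the
ℓ¹ norm on ℝⁿ; in particular `⟦x,x⟧₁ = ‖x‖₁²` and `|⟦x,y⟧₁| ≤ ‖x‖₁‖y‖₁`. -/
theorem l1_weak_pairing {n : ℕ} (hn : 0 < n)
    (P : (Fin n → ℝ) → (Fin n → ℝ) → ℝ)
    (hP : ∀ x y : Fin n → ℝ,
      P x y = (∑ i, |y i|) * ∑ i, Real.sign (y i) * x i) :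
    (∀ x₁ x₂ y : Fin n → ℝ, P (x₁ + x₂) y ≤ P x₁ y + P x₂ y) ∧
    (∀ y : Fin n → ℝ, Continuous fun x => P x y) ∧
    (∀ α : ℝ, 0 ≤ α → ∀ x y : Fin n → ℝ,
      P (α • x) y = α * P x y ∧ P x (α • y) = α * P x y) ∧
    (∀ x y : Fin n → ℝ, P (-x) (-y) = P x y) ∧
    (∀ x : Fin n → ℝ, P x x = (∑ i, |x i|) ^ 2) ∧
    (∀ x : Fin n → ℝ, x ≠ 0 → 0 < P x x) ∧
    (∀ x y : Fin n → ℝ, |P x y| ≤ (∑ i, |x i|) * (∑ i, |y i|)) := by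
  refine ⟨?_, ?_, ?_, ?_, ?_, ?_, ?_⟩
  · intro x₁ x₂ y
    simp only [hP, Pi.add_apply]
    rw [← mul_add, ← Finset.sum_add_distrib]
    apply le_of_eq
    congr 1
    apply Finset.sum_congr rfl
    intro i _
    ring
  · intro y
    simp only [hP]
    exact continuous_const.mul (continuous_finset_sum _ fun i _ =>
      continuous_const.mul (continuous_apply i))
  · intro α hα x y
    constructor
    · simp only [hP, Pi.smul_apply, smul_eq_mul, Finset.mul_sum]
      exact Finset.sum_congr rfl fun i _ => by ring
    · rcases hα.lt_or_eq with h | h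
      · simp only [hP, Pi.smul_apply, smul_eq_mul, sign_smul_pos' h,
          abs_mul, abs_of_pos h, ← Finset.mul_sum]
        ring
      · simp only [hP, ← h, Pi.smul_apply, smul_eq_mul, zero_mul, abs_zero,
          Finset.sum_const_zero, Real.sign_zero]
  · intro x y
    simp only [hP, Pi.neg_apply, Real.sign_neg, abs_neg]
    congr 1
    apply Finset.sum_congr rfl
    intro i _
    ring
  · intro x
    rw [hP, sq]
    congr 1
    exact Finset.sum_congr rfl fun i _ => sign_mul_self' (x i)
  · intro x hx
    rw [hP]
    have hs : ∀ i ∈ Finset.univ, Real.sign (x i) * x i = |x i| :=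
      fun i _ => sign_mul_self' (x i)
    rw [Finset.sum_congr rfl hs]
    have hpos : 0 < ∑ i, |x i| := by
      obtain ⟨i, hi⟩ : ∃ i, x i ≠ 0 := by
        by_contra h
        push_neg at h
        exact hx (funext h)
      exact Finset.sum_pos' (fun j _ => abs_nonneg _)
        ⟨i, Finset.mem_univ i, abs_pos.mpr hi⟩
    exact mul_pos hpos hpos
  · intro x y
    rw [hP, abs_mul, abs_of_nonneg (Finset.sum_nonneg fun i _ => abs_nonneg _),
      mul_comm ((∑ i, |x i|))]
    apply mul_le_mul_of_nonneg_left _ (Finset.sum_nonneg fun i _ => abs_nonneg _)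
    calc |∑ i, Real.sign (y i) * x i| ≤ ∑ i, |Real.sign (y i) * x i| :=
          Finset.abs_sum_le_sum_abs _ _
      _ ≤ ∑ i, |x i| := Finset.sum_le_sum fun i _ => by
          rw [abs_mul]
          exact mul_le_of_le_one_left (abs_nonneg _) (abs_sign_le_one' _)
end

section
/- Lumer's equality: for any norm ‖·‖ on ℝ^n with a compatible weak pairing ⟦·,·⟧ satisfying Deimling's inequality, and any matrix A ∈ ℝ^{n×n}, the logarithmic norm satisfies μ(A) = sup_{x ≠ 0} ⟦Ax, x⟧ / ‖x‖². -/
open Filter Set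

/-- Lumer's equality: for a norm `N` on ℝⁿ with a compatible weak pairing `P`
satisfying Deimling's inequality, the logarithmic norm of a matrix `A` equals
`sup_{x ≠ 0} ⟦Ax, x⟧ / ‖x‖²`. -/
theorem lumer_equality {n : ℕ} (hn : 0 < n) (A : Matrix (Fin n) (Fin n) ℝ)
    (N : (Fin n → ℝ) → ℝ)
    (N_add : ∀ x y, N (x + y) ≤ N x + N y)
    (N_smul : ∀ (c : ℝ) x, N (c • x) = |c| * N x)
    (N_pos : ∀ x, x ≠ 0 → 0 < N x)
    (P : (Fin n → ℝ) → (Fin n → ℝ) → ℝ)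
    (P_subadd : ∀ x₁ x₂ y, P (x₁ + x₂) y ≤ P x₁ y + P x₂ y)
    (P_cont : ∀ y, Continuous fun x => P x y)
    (P_homog : ∀ α : ℝ, 0 ≤ α → ∀ x y,
      P (α • x) y = α * P x y ∧ P x (α • y) = α * P x y)
    (P_neg : ∀ x y, P (-x) (-y) = P x y)
    (P_compat : ∀ x, P x x = N x ^ 2)
    (P_cs : ∀ x y, |P x y| ≤ N x * N y)
    (P_deimling : ∀ x y, ∀ D : ℝ,
      Filter.Tendsto (fun h : ℝ => (N (y + h • x) - N y) / h)
        (nhdsWithin 0 (Set.Ioi 0)) (nhds D) → P x y ≤ N y * D)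
    (opN : Matrix (Fin n) (Fin n) ℝ → ℝ)
    (hopN : ∀ M : Matrix (Fin n) (Fin n) ℝ,
      IsLUB {t : ℝ | ∃ x, N x = 1 ∧ t = N (M.mulVec x)} (opN M))
    (μ : ℝ)
    (hμ : Filter.Tendsto (fun h : ℝ => (opN (1 + h • A) - 1) / h)
      (nhdsWithin 0 (Set.Ioi 0)) (nhds μ)) :
    IsLUB {r : ℝ | ∃ x : Fin n → ℝ, x ≠ 0 ∧ r = P (A.mulVec x) x / N x ^ 2} μ := by
  -- basic facts about N
  have hN0 : N 0 = 0 := by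
    have := N_smul 0 0; simpa using this
  have hNneg : ∀ x, 0 ≤ N x := by
    intro x
    rcases eq_or_ne x 0 with h | h
    · simp [h, hN0]
    · exact (N_pos x h).le
  -- mulVec of 1 + h•A
  have hmv : ∀ (h : ℝ) (x : Fin n → ℝ),
      (1 + h • A).mulVec x = x + h • A.mulVec x := by
    intro h x
    rw [Matrix.add_mulVec, Matrix.one_mulVec, Matrix.smul_mulVec]
  -- operator norm bound
  have hop_le : ∀ (M : Matrix (Fin n) (Fin n) ℝ) x, N (M.mulVec x) ≤ opN M * N x := by
    intro M x
    rcases eq_or_ne x 0 with h | h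
    · simp [h, hN0, Matrix.mulVec_zero]
    · have hc : 0 < N x := N_pos x h
      set u := (N x)⁻¹ • x with hu
      have hNu : N u = 1 := by
        rw [hu, N_smul, abs_of_nonneg (by positivity)]
        field_simp
      have h1 : N (M.mulVec u) ≤ opN M := (hopN M).1 ⟨u, hNu, rfl⟩
      have hx : x = N x • u := by
        rw [hu, smul_smul, mul_inv_cancel₀ hc.ne', one_smul]
      calc N (M.mulVec x) = N (M.mulVec (N x • u)) := by rw [← hx]
        _ = N x * N (M.mulVec u) := by
            rw [Matrix.mulVec_smul, N_smul, abs_of_nonneg hc.le]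
        _ ≤ N x * opN M := by nlinarith
        _ = opN M * N x := mul_comm _ _
  -- existence of a unit vector
  obtain ⟨e, hNe⟩ : ∃ e, N e = 1 := by
    set e₀ : Fin n → ℝ := fun _ => 1 with he₀
    have h1 : e₀ ≠ 0 := by
      intro h
      have h2 := congrFun h ⟨0, hn⟩
      simp [he₀] at h2
    have hc : 0 < N e₀ := N_pos _ h1
    refine ⟨(N e₀)⁻¹ • e₀, ?_⟩
    rw [N_smul, abs_of_nonneg (by positivity)]
    field_simp
  have hopN_nonneg : ∀ M, 0 ≤ opN M := by
    intro M
    exact le_trans (hNneg (M.mulVec e)) ((hopN M).1 ⟨e, hNe, rfl⟩)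
  -- key: for unit vectors, P (Au) u ≤ μ
  have key : ∀ u, N u = 1 → P (A.mulVec u) u ≤ μ := by
    intro u hu
    set v := A.mulVec u with hv
    set φ : ℝ → ℝ := fun h => (N (u + h • v) - N u) / h with hφ
    have hmono : MonotoneOn φ (Set.Ioi 0) := by
      intro s hs t ht hst
      have hs0 : (0:ℝ) < s := hs
      have ht0 : (0:ℝ) < t := ht
      have heq : u + s • v = (1 - s/t) • u + (s/t) • (u + t • v) := by
        have h1 : (s/t) • (t • v) = s • v := by
          rw [smul_smul, div_mul_cancel₀ _ ht0.ne']
        rw [smul_add, h1, sub_smul, one_smul]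
        abel
      have hst' : s / t * t = s := div_mul_cancel₀ _ ht0.ne'
      have hb : N (u + s • v) ≤ (1 - s/t) * N u + (s/t) * N (u + t • v) := by
        rw [heq]
        calc N ((1 - s/t) • u + (s/t) • (u + t • v))
            ≤ N ((1 - s/t) • u) + N ((s/t) • (u + t • v)) := N_add _ _
          _ = (1 - s/t) * N u + (s/t) * N (u + t • v) := by
              rw [N_smul, N_smul,
                abs_of_nonneg (by rw [sub_nonneg, div_le_one ht0]; exact hst),
                abs_of_nonneg (div_nonneg hs0.le ht0.le)]
      simp only [hφ]
      rw [div_le_div_iff₀ hs0 ht0]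
      rw [hu] at hb ⊢
      nlinarith [mul_le_mul_of_nonneg_right hb ht0.le, hst', hNneg (u + t • v)]
    have hbdd : BddBelow (φ '' Set.Ioi 0) := by
      refine ⟨-N v, ?_⟩
      rintro _ ⟨h, hh, rfl⟩
      have hh0 : (0:ℝ) < h := hh
      have h1 : N u ≤ N (u + h • v) + h * N v := by
        have h2 := N_add (u + h • v) (-(h • v))
        simp only [add_neg_cancel_right] at h2
        calc N u ≤ N (u + h • v) + N (-(h • v)) := h2
          _ = N (u + h • v) + h * N v := by
              rw [← neg_smul, N_smul, abs_of_nonpos (by linarith), neg_neg]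
      simp only [hφ]
      rw [le_div_iff₀ hh0]
      nlinarith
    set D := sInf (φ '' Set.Ioi 0) with hD
    have hφD : Tendsto φ (nhdsWithin 0 (Set.Ioi 0)) (nhds D) :=
      hmono.tendsto_nhdsGT hbdd
    have hDμ : D ≤ μ := by
      refine le_of_tendsto_of_tendsto hφD hμ ?_
      filter_upwards [self_mem_nhdsWithin] with h hh
      have hh0 : (0:ℝ) < h := hh
      have h1 : N (u + h • v) ≤ opN (1 + h • A) := by
        have h2 := hop_le (1 + h • A) u
        rw [hmv, hu, mul_one, ← hv] at h2
        exact h2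
      simp only [hφ]
      rw [hu]
      gcongr
    have hP : P v u ≤ N u * D := P_deimling v u D hφD
    rw [hu, one_mul] at hP
    exact hP.trans hDμ
  constructor
  · -- upper bound
    rintro r ⟨x, hx, rfl⟩
    have hc : 0 < N x := N_pos x hx
    set c := N x with hcdef
    set u := c⁻¹ • x with hudef
    have hNu : N u = 1 := by
      rw [hudef, N_smul, abs_of_nonneg (by positivity)]
      field_simp
      exact hcdef.symm
    have hPu : P (A.mulVec u) u = c⁻¹ * (c⁻¹ * P (A.mulVec x) x) := by
      rw [hudef, Matrix.mulVec_smul,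
        (P_homog c⁻¹ (by positivity) (A.mulVec x) (c⁻¹ • x)).1,
        (P_homog c⁻¹ (by positivity) (A.mulVec x) x).2]
    have hle := key u hNu
    rw [hPu] at hle
    rw [div_le_iff₀ (by positivity)]
    have hcc : c⁻¹ * c⁻¹ * P (A.mulVec x) x ≤ μ := by linarith [hle]
    have hinv : c * c⁻¹ = 1 := mul_inv_cancel₀ hc.ne'
    calc P (A.mulVec x) x = c^2 * (c⁻¹ * c⁻¹ * P (A.mulVec x) x) := by
          field_simp
      _ ≤ c^2 * μ := by nlinarith [sq_nonneg c]
      _ = μ * c^2 := mul_comm _ _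
  · -- least upper bound
    intro b hb
    set C := opN (A * A) with hC
    have hC0 : 0 ≤ C := hopN_nonneg _
    have hbP : ∀ y, P (A.mulVec y) y ≤ b * N y ^ 2 := by
      intro y
      rcases eq_or_ne y 0 with h | h
      · simp [h, Matrix.mulVec_zero, P_compat, hN0]
      · have hy := N_pos y h
        have h2 := hb ⟨y, h, rfl⟩
        rw [div_le_iff₀ (by positivity)] at h2
        linarith
    -- the key estimate for small positive h
    have hest : ∀ h : ℝ, 0 < h → 0 < 1 - h * b →
        opN (1 + h • A) ≤ (1 + h^2 * C) / (1 - h * b) := by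
      intro h hh0 hhb
      refine (hopN (1 + h • A)).2 ?_
      rintro _ ⟨x, hx1, rfl⟩
      rw [hmv]
      set y := x + h • A.mulVec x with hy
      have hymain : N y * (1 - h * b) ≤ 1 + h^2 * C := by
        rcases eq_or_lt_of_le (hNneg y) with h0 | h0
        · rw [← h0]; nlinarith
        · have e1 : N y ^ 2 ≤ P x y + h * P (A.mulVec x) y := by
            rw [← P_compat y]
            calc P y y = P (x + h • A.mulVec x) y := by rw [hy]
              _ ≤ P x y + P (h • A.mulVec x) y := P_subadd _ _ _
              _ = P x y + h * P (A.mulVec x) y := by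
                  rw [(P_homog h hh0.le (A.mulVec x) y).1]
          have e2 : P x y ≤ N y := by
            have h3 := (abs_le.mp (P_cs x y)).2
            rw [hx1, one_mul] at h3
            exact h3
          have e3 : A.mulVec x = A.mulVec y + h • (-(A.mulVec (A.mulVec x))) := by
            rw [hy, Matrix.mulVec_add, Matrix.mulVec_smul, smul_neg]
            abel
          have e4 : P (A.mulVec x) y ≤ b * N y ^ 2 + h * (C * N y) := by
            calc P (A.mulVec x) y
                = P (A.mulVec y + h • (-(A.mulVec (A.mulVec x)))) y := by rw [← e3]
              _ ≤ P (A.mulVec y) y + P (h • (-(A.mulVec (A.mulVec x)))) y :=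
                  P_subadd _ _ _
              _ = P (A.mulVec y) y + h * P (-(A.mulVec (A.mulVec x))) y := by
                  rw [(P_homog h hh0.le _ y).1]
              _ ≤ b * N y ^ 2 + h * (C * N y) := by
                  have h5 : P (-(A.mulVec (A.mulVec x))) y ≤ C * N y := by
                    have hcs := (abs_le.mp (P_cs (-(A.mulVec (A.mulVec x))) y)).2
                    have hNA : N (-(A.mulVec (A.mulVec x))) ≤ C := by
                      have h6 : N (-(A.mulVec (A.mulVec x)))
                          = N (A.mulVec (A.mulVec x)) := by
                        rw [← neg_one_smul ℝ, N_smul]; simp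
                      rw [h6, Matrix.mulVec_mulVec]
                      have h7 := hop_le (A * A) x
                      rw [hx1, mul_one] at h7
                      exact h7
                    nlinarith [mul_le_mul_of_nonneg_right hNA (hNneg y)]
                  nlinarith [hbP y]
          nlinarith
      rw [le_div_iff₀ hhb]
      exact hymain
    -- conclude by taking limits
    have hg : Tendsto (fun h : ℝ => (h * C + b) / (1 - h * b))
        (nhdsWithin 0 (Set.Ioi 0)) (nhds b) := by
      have h1 : Tendsto (fun h : ℝ => (h * C + b) / (1 - h * b)) (nhds 0) (nhds b) := by
        have hnum : Tendsto (fun h : ℝ => h * C + b) (nhds 0) (nhds b) := by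
          have hcont : Continuous (fun h : ℝ => h * C + b) :=
            (continuous_id.mul continuous_const).add continuous_const
          simpa using hcont.tendsto 0
        have hden : Tendsto (fun h : ℝ => 1 - h * b) (nhds 0) (nhds 1) := by
          have hcont : Continuous (fun h : ℝ => 1 - h * b) :=
            continuous_const.sub (continuous_id.mul continuous_const)
          simpa using hcont.tendsto 0
        have h2 := hnum.div hden one_ne_zero
        rw [div_one] at h2
        exact h2
      exact h1.mono_left nhdsWithin_le_nhds
    refine le_of_tendsto_of_tendsto hμ hg ?_
    have hev : ∀ᶠ h : ℝ in nhdsWithin 0 (Set.Ioi 0), 0 < 1 - h * b := by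
      have hden : Tendsto (fun h : ℝ => 1 - h * b)
          (nhdsWithin 0 (Set.Ioi 0)) (nhds 1) := by
        have hcont : Continuous (fun h : ℝ => 1 - h * b) :=
          continuous_const.sub (continuous_id.mul continuous_const)
        exact Tendsto.mono_left (by simpa using hcont.tendsto 0) nhdsWithin_le_nhds
      exact hden.eventually (eventually_gt_nhds one_pos)
    filter_upwards [self_mem_nhdsWithin, hev] with h hh hhb
    have hh0 : (0:ℝ) < h := hh
    have h1 := hest h hh0 hhb
    have h2 : (opN (1 + h • A) - 1) / h ≤ ((1 + h^2 * C) / (1 - h * b) - 1) / h := by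
      gcongr
    have h3 : ((1 + h^2 * C) / (1 - h * b) - 1) / h = (h * C + b) / (1 - h * b) := by
      field_simp
      ring
    linarith
end

section
/- Non-Euclidean Minty–Browder theorem: if F : ℝ^n → ℝ^n is continuous and monotone with respect to a norm ‖·‖ (with compatible weak pairing), then for every α > 0 the map Id + αF : ℝ^n → ℝ^n is a bijection; consequently the resolvent J_{αF} = (Id + αF)^{−1} has full domain ℝ^n. -/
open Metric Filter MeasureTheory Convolution
open scoped ENNReal NNReal

section NormFacts
variable {n : ℕ} (N : (Fin n → ℝ) → ℝ)

theorem mb_N_zero (N_smul : ∀ (c : ℝ) x, N (c • x) = |c| * N x) : N 0 = 0 := by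
  have := N_smul 0 0; simpa using this

theorem mb_N_neg (N_smul : ∀ (c : ℝ) x, N (c • x) = |c| * N x) (x : Fin n → ℝ) :
    N (-x) = N x := by
  have := N_smul (-1) x; simpa using this

theorem mb_N_nonneg (N_add : ∀ x y, N (x + y) ≤ N x + N y)
    (N_smul : ∀ (c : ℝ) x, N (c • x) = |c| * N x) (x : Fin n → ℝ) : 0 ≤ N x := by
  have h := N_add x (-x)
  rw [add_neg_cancel, mb_N_zero N N_smul, mb_N_neg N N_smul] at h
  linarith

theorem mb_N_le (N_add : ∀ x y, N (x + y) ≤ N x + N y) (x y : Fin n → ℝ) :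
    N x - N y ≤ N (x - y) := by
  have := N_add (x - y) y; simp at this; linarith

theorem mb_N_upper (N_add : ∀ x y, N (x + y) ≤ N x + N y)
    (N_smul : ∀ (c : ℝ) x, N (c • x) = |c| * N x) :
    ∃ C : ℝ, 0 < C ∧ ∀ x, N x ≤ C * ‖x‖ := by
  refine ⟨(∑ i : Fin n, N (Pi.single i 1)) + 1, ?_, ?_⟩
  · have : ∀ i : Fin n, 0 ≤ N (Pi.single i 1) := fun i => mb_N_nonneg N N_add N_smul _
    have h2 := Finset.sum_nonneg (s := Finset.univ) (fun i _ => this i)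
    linarith
  · intro x
    have hx : x = ∑ i : Fin n, x i • (Pi.single i 1 : Fin n → ℝ) := by
      ext j; simp [Pi.single_apply]
    calc N x = N (∑ i : Fin n, x i • (Pi.single i 1 : Fin n → ℝ)) := by rw [← hx]
      _ ≤ ∑ i : Fin n, N (x i • (Pi.single i 1 : Fin n → ℝ)) :=
          Finset.le_sum_of_subadditive N (mb_N_zero N N_smul).le N_add _ _
      _ = ∑ i : Fin n, |x i| * N (Pi.single i 1) := by simp [N_smul]
      _ ≤ ∑ i : Fin n, ‖x‖ * N (Pi.single i 1) := by
          refine Finset.sum_le_sum fun i _ => ?_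
          have h1 : |x i| ≤ ‖x‖ := by
            simpa [Real.norm_eq_abs] using norm_le_pi_norm x i
          exact mul_le_mul_of_nonneg_right h1 (mb_N_nonneg N N_add N_smul _)
      _ = (∑ i : Fin n, N (Pi.single i 1)) * ‖x‖ := by
          rw [Finset.sum_mul]; exact Finset.sum_congr rfl fun i _ => mul_comm _ _
      _ ≤ ((∑ i : Fin n, N (Pi.single i 1)) + 1) * ‖x‖ := by
          have : (0:ℝ) ≤ ‖x‖ := norm_nonneg x
          nlinarith

theorem mb_N_cont (N_add : ∀ x y, N (x + y) ≤ N x + N y)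
    (N_smul : ∀ (c : ℝ) x, N (c • x) = |c| * N x) : Continuous N := by
  obtain ⟨C, hC, hCle⟩ := mb_N_upper N N_add N_smul
  rw [Metric.continuous_iff]
  intro x ε hε
  refine ⟨ε / C, by positivity, fun y hy => ?_⟩
  have h1 : N y - N x ≤ N (y - x) := mb_N_le N N_add y x
  have h2 : N x - N y ≤ N (x - y) := mb_N_le N N_add x y
  have h3 : N (y - x) ≤ C * ‖y - x‖ := hCle _
  have h4 : N (x - y) ≤ C * ‖x - y‖ := hCle _
  have h5 : ‖y - x‖ = dist y x := (dist_eq_norm y x).symm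
  have h6 : ‖x - y‖ = dist y x := by rw [dist_comm]; exact (dist_eq_norm x y).symm
  rw [Real.dist_eq, abs_lt]
  constructor <;> [skip; skip] <;>
  · rw [h5] at h3; rw [h6] at h4
    have : dist y x * C < ε / C * C := by
      exact mul_lt_mul_of_pos_right hy hC
    rw [div_mul_cancel₀ _ (ne_of_gt hC)] at this
    nlinarith [dist_nonneg (x := y) (y := x)]

theorem mb_N_lower (hn : 0 < n) (N_add : ∀ x y, N (x + y) ≤ N x + N y)
    (N_smul : ∀ (c : ℝ) x, N (c • x) = |c| * N x)
    (N_pos : ∀ x, x ≠ 0 → 0 < N x) :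
    ∃ c : ℝ, 0 < c ∧ ∀ x, c * ‖x‖ ≤ N x := by
  have hsph : (sphere (0 : Fin n → ℝ) 1).Nonempty := by
    refine ⟨Pi.single ⟨0, hn⟩ 1, ?_⟩
    have : ‖(Pi.single ⟨0, hn⟩ 1 : Fin n → ℝ)‖ = 1 := by
      rw [Pi.norm_single]; norm_num
    simpa [mem_sphere_iff_norm] using this
  obtain ⟨x₀, hx₀s, hx₀min⟩ := (isCompact_sphere (0 : Fin n → ℝ) 1).exists_isMinOn hsph
    ((mb_N_cont N N_add N_smul).continuousOn)
  have hx₀norm : ‖x₀‖ = 1 := by simpa [mem_sphere_iff_norm] using hx₀s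
  have hx₀ne : x₀ ≠ 0 := by intro h; rw [h] at hx₀norm; simp at hx₀norm
  refine ⟨N x₀, N_pos _ hx₀ne, fun x => ?_⟩
  rcases eq_or_ne x 0 with rfl | hx
  · simp [mb_N_zero N N_smul]
  · have hxn : (0:ℝ) < ‖x‖ := norm_pos_iff.2 hx
    have hu : (‖x‖⁻¹ • x) ∈ sphere (0 : Fin n → ℝ) 1 := by
      simp [mem_sphere_iff_norm, norm_smul, abs_of_pos (inv_pos.2 hxn),
        inv_mul_cancel₀ (ne_of_gt hxn)]
    have hmin := hx₀min hu
    have : N x = ‖x‖ * N (‖x‖⁻¹ • x) := by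
      have h9 : ‖x‖ * N (‖x‖⁻¹ • x) = |‖x‖| * N (‖x‖⁻¹ • x) := by
        rw [abs_of_pos hxn]
      rw [h9, ← N_smul]
      congr 1
      rw [smul_smul, mul_inv_cancel₀ (ne_of_gt hxn), one_smul]
    rw [this]
    calc N x₀ * ‖x‖ ≤ N (‖x‖⁻¹ • x) * ‖x‖ := by
          exact mul_le_mul_of_nonneg_right hmin (le_of_lt hxn)
      _ = ‖x‖ * N (‖x‖⁻¹ • x) := mul_comm _ _

end NormFacts

section Expansive
variable {n : ℕ} (N : (Fin n → ℝ) → ℝ) (P : (Fin n → ℝ) → (Fin n → ℝ) → ℝ)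

/-- Monotonicity implies expansiveness of `Id + α F'`. -/
theorem mb_expansive
    (N_add : ∀ x y, N (x + y) ≤ N x + N y)
    (N_smul : ∀ (c : ℝ) x, N (c • x) = |c| * N x)
    (P_subadd : ∀ x₁ x₂ y, P (x₁ + x₂) y ≤ P x₁ y + P x₂ y)
    (P_homog : ∀ α : ℝ, 0 ≤ α → ∀ x y,
      P (α • x) y = α * P x y ∧ P x (α • y) = α * P x y)
    (P_compat : ∀ x, P x x = N x ^ 2)
    (P_cs : ∀ x y, |P x y| ≤ N x * N y)
    (F' : (Fin n → ℝ) → (Fin n → ℝ))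
    (hmono : ∀ x y, 0 ≤ -P (-(F' x - F' y)) (x - y))
    (α : ℝ) (hα : 0 ≤ α) (x y : Fin n → ℝ) :
    N (x - y) ≤ N ((x + α • F' x) - (y + α • F' y)) := by
  set u := x - y with hu
  set d := F' x - F' y with hd
  have hw : (x + α • F' x) - (y + α • F' y) = u + α • d := by
    simp only [hu, hd, smul_sub]; abel
  rw [hw]
  set w := u + α • d with hwdef
  have h1 : u = w + (-(α • d)) := by simp [hwdef]
  have h2 : P u u ≤ P w u + P (-(α • d)) u := by
    calc P u u = P (w + (-(α • d))) u := by rw [← h1]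
      _ ≤ P w u + P (-(α • d)) u := P_subadd _ _ _
  have h3 : P (-(α • d)) u = α * P (-d) u := by
    rw [show -(α • d) = α • (-d) by rw [smul_neg]]
    exact (P_homog α hα (-d) u).1
  have h4 : P (-d) u ≤ 0 := by have := hmono x y; rw [← hd, ← hu] at this; linarith
  have h5 : P u u ≤ P w u := by
    have : α * P (-d) u ≤ 0 := mul_nonpos_of_nonneg_of_nonpos hα h4
    linarith
  have h6 : N u ^ 2 ≤ N w * N u := by
    have := P_cs w u
    have h7 := (P_compat u)
    have habs : P w u ≤ N w * N u := le_trans (le_abs_self _) this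
    linarith
  rcases le_or_gt (N u) 0 with h | h
  · linarith [mb_N_nonneg N N_add N_smul u, mb_N_nonneg N N_add N_smul w]
  · nlinarith

end Expansive

section Smooth
variable {n : ℕ} (N : (Fin n → ℝ) → ℝ)

/-- closed range for expansive continuous maps -/
theorem mb_closed_range (G : (Fin n → ℝ) → (Fin n → ℝ)) (hGc : Continuous G)
    (K : ℝ) (hK : 0 < K) (hanti : ∀ a b, dist a b ≤ K * dist (G a) (G b)) :
    IsClosed (Set.range G) := by
  apply IsSeqClosed.isClosed
  intro u y hu huy
  choose v hv using hu
  have hcu : CauchySeq u := huy.cauchySeq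
  have hcv : CauchySeq v := by
    rw [Metric.cauchySeq_iff] at hcu ⊢
    intro ε hε
    obtain ⟨Nk, hNk⟩ := hcu (ε / K) (by positivity)
    refine ⟨Nk, fun m hm l hl => ?_⟩
    have h1 : dist (v m) (v l) ≤ K * dist (G (v m)) (G (v l)) := hanti _ _
    have h2 : dist (G (v m)) (G (v l)) = dist (u m) (u l) := by rw [hv m, hv l]
    have h3 := hNk m hm l hl
    calc dist (v m) (v l) ≤ K * dist (u m) (u l) := by rw [← h2]; exact h1
      _ < K * (ε / K) := by exact mul_lt_mul_of_pos_left h3 hK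
      _ = ε := by field_simp
  obtain ⟨p, hp⟩ := cauchySeq_tendsto_of_complete hcv
  refine ⟨p, ?_⟩
  have h1 : Tendsto (fun k => G (v k)) atTop (nhds (G p)) := (hGc.continuousAt.tendsto).comp hp
  have h2 : (fun k => G (v k)) = u := funext hv
  rw [h2] at h1
  exact (tendsto_nhds_unique h1 huy)

/-- A C¹ map that is expansive w.r.t. `N` is surjective. -/
theorem mb_surj_smooth
    (N_add : ∀ x y, N (x + y) ≤ N x + N y)
    (N_smul : ∀ (c : ℝ) x, N (c • x) = |c| * N x)
    (N_pos : ∀ x, x ≠ 0 → 0 < N x)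
    (c C : ℝ) (hc : 0 < c) (hC : 0 < C)
    (hlow : ∀ x, c * ‖x‖ ≤ N x) (hup : ∀ x, N x ≤ C * ‖x‖)
    (G : (Fin n → ℝ) → (Fin n → ℝ)) (hG : ContDiff ℝ 1 G)
    (hexp : ∀ x y, N (x - y) ≤ N (G x - G y)) :
    Function.Surjective G := by
  have hGc : Continuous G := hG.continuous
  have hNcont : Continuous N := mb_N_cont N N_add N_smul
  -- antilipschitz
  have hanti : ∀ a b, dist a b ≤ (C / c) * dist (G a) (G b) := by
    intro a b
    have h1 : c * ‖a - b‖ ≤ N (a - b) := hlow _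
    have h2 : N (a - b) ≤ N (G a - G b) := hexp a b
    have h3 : N (G a - G b) ≤ C * ‖G a - G b‖ := hup _
    rw [dist_eq_norm, dist_eq_norm]
    rw [div_mul_eq_mul_div, le_div_iff₀ hc]
    nlinarith [norm_nonneg (a - b), norm_nonneg (G a - G b)]
  have hrange : IsClosed (Set.range G) :=
    mb_closed_range G hGc (C / c) (by positivity) hanti
  -- derivative is invertible everywhere
  have hderiv : ∀ x : Fin n → ℝ, ∃ e : (Fin n → ℝ) ≃L[ℝ] (Fin n → ℝ),
      HasStrictFDerivAt G (e : (Fin n → ℝ) →L[ℝ] (Fin n → ℝ)) x := by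
    intro x
    have hstrict : HasStrictFDerivAt G (fderiv ℝ G x) x :=
      hG.contDiffAt.hasStrictFDerivAt one_ne_zero
    have hD : HasFDerivAt G (fderiv ℝ G x) x := hstrict.hasFDerivAt
    set D := fderiv ℝ G x with hDdef
    have hinj : Function.Injective D := by
      rw [injective_iff_map_eq_zero]
      intro v hv
      by_contra hvne
      have hlim : Filter.Tendsto (fun t : ℝ => t⁻¹ • (G (x + t • v) - G x))
          (nhdsWithin 0 {(0:ℝ)}ᶜ) (nhds (D v)) := by
        have hl : HasDerivAt (fun t : ℝ => G (x + t • v)) (D v) 0 := by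
          have h1 : HasDerivAt (fun t : ℝ => x + t • v) v 0 := by
            simpa using ((hasDerivAt_id (0:ℝ)).smul_const v).const_add x
          have h0 : HasFDerivAt G D (x + (0:ℝ) • v) := by simpa using hD
          exact h0.comp_hasDerivAt (0:ℝ) h1
        have := hasDerivAt_iff_tendsto_slope.1 hl
        convert this using 2 with t
        simp [slope, vsub_eq_sub]
      have hNlim : Filter.Tendsto (fun t : ℝ => N (t⁻¹ • (G (x + t • v) - G x)))
          (nhdsWithin 0 {(0:ℝ)}ᶜ) (nhds (N (D v))) :=
        (hNcont.continuousAt.tendsto).comp hlim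
      have hlb : ∀ t : ℝ, t ≠ 0 → N v ≤ N (t⁻¹ • (G (x + t • v) - G x)) := by
        intro t ht
        rw [N_smul]
        have h1 : N ((x + t • v) - x) ≤ N (G (x + t • v) - G x) := hexp _ _
        have h2 : (x + t • v) - x = t • v := by abel
        rw [h2, N_smul] at h1
        have h3 : |t⁻¹| * (|t| * N v) ≤ |t⁻¹| * N (G (x + t • v) - G x) :=
          mul_le_mul_of_nonneg_left h1 (abs_nonneg _)
        have h4 : |t⁻¹| * |t| = 1 := by
          rw [abs_inv, inv_mul_cancel₀ (abs_ne_zero.2 ht)]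
        calc N v = |t⁻¹| * |t| * N v := by rw [h4, one_mul]
          _ = |t⁻¹| * (|t| * N v) := by ring
          _ ≤ |t⁻¹| * N (G (x + t • v) - G x) := h3
      have hge : N v ≤ N (D v) := by
        refine ge_of_tendsto hNlim ?_
        filter_upwards [self_mem_nhdsWithin] with t ht
        exact hlb t ht
      rw [hv, mb_N_zero N N_smul] at hge
      exact absurd hge (not_le.2 (N_pos v hvne))
    have hbij : Function.Bijective D :=
      ⟨hinj, (LinearMap.injective_iff_surjective (f := (D : (Fin n → ℝ) →ₗ[ℝ] (Fin n → ℝ)))).1 hinj⟩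
    refine ⟨(LinearEquiv.ofBijective (D : (Fin n → ℝ) →ₗ[ℝ] (Fin n → ℝ)) hbij).toContinuousLinearEquiv, ?_⟩
    have hcoe : ((LinearEquiv.ofBijective (D : (Fin n → ℝ) →ₗ[ℝ] (Fin n → ℝ)) hbij).toContinuousLinearEquiv :
        (Fin n → ℝ) →L[ℝ] (Fin n → ℝ)) = D := by
      apply ContinuousLinearMap.ext; intro v; rfl
    rw [hcoe]
    exact hstrict
  -- main connectedness argument
  intro z
  set cc : ℝ → (Fin n → ℝ) := fun t => G 0 + t • (z - G 0) with hccdef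
  have hcc_cont : Continuous cc := by continuity
  set S : Set ℝ := Set.Icc (0:ℝ) 1 ∩ cc ⁻¹' (Set.range G) with hSdef
  have h0S : (0:ℝ) ∈ S := by
    constructor
    · exact ⟨le_refl 0, zero_le_one⟩
    · refine ⟨0, ?_⟩; simp [hccdef]
  have hSbdd : BddAbove S := ⟨1, fun t ht => ht.1.2⟩
  have hSclosed : IsClosed S := isClosed_Icc.inter (hrange.preimage hcc_cont)
  set T := sSup S with hTdef
  have hTS : T ∈ S := hSclosed.csSup_mem ⟨0, h0S⟩ hSbdd
  have hT1 : T ≤ 1 := hTS.1.2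
  rcases eq_or_lt_of_le hT1 with hTeq | hTlt
  · obtain ⟨xT, hxT⟩ := hTS.2
    refine ⟨xT, ?_⟩
    rw [hxT, hTeq]
    simp [hccdef]
  · obtain ⟨xT, hxT⟩ := hTS.2
    obtain ⟨e, he⟩ := hderiv xT
    set Φ := he.toOpenPartialHomeomorph G with hΦdef
    have hsrc : xT ∈ Φ.source := he.mem_toOpenPartialHomeomorph_source
    have hcoe : (Φ : (Fin n → ℝ) → (Fin n → ℝ)) = G := he.toOpenPartialHomeomorph_coe
    have htgt : cc T ∈ Φ.target := by
      have := Φ.map_source hsrc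
      rwa [show Φ xT = G xT from congrFun hcoe xT, hxT] at this
    have hopen : IsOpen Φ.target := Φ.open_target
    have hnhds : cc ⁻¹' Φ.target ∈ nhds T :=
      hcc_cont.continuousAt.preimage_mem_nhds (hopen.mem_nhds htgt)
    obtain ⟨δ, hδ, hball⟩ := Metric.mem_nhds_iff.1 hnhds
    set t' := min 1 (T + δ/2) with ht'def
    have hTt' : T < t' := by
      rw [ht'def]
      exact lt_min hTlt (by linarith)
    have ht'mem : t' ∈ ball T δ := by
      rw [mem_ball, Real.dist_eq, abs_lt]
      constructor
      · linarith
      · have : t' ≤ T + δ/2 := min_le_right _ _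
        linarith
    have ht'tgt : cc t' ∈ Φ.target := hball ht'mem
    have ht'S : t' ∈ S := by
      constructor
      · exact ⟨le_trans (le_trans hTS.1.1 (le_of_lt hTt')) (le_refl t'), min_le_left _ _⟩
      · refine ⟨Φ.symm (cc t'), ?_⟩
        rw [← congrFun hcoe (Φ.symm (cc t'))]
        exact Φ.right_inv ht'tgt
    have : t' ≤ T := le_csSup hSbdd ht'S
    linarith

end Smooth

section Mollify
variable {n : ℕ}

noncomputable def mbMeas (φ : ContDiffBump (0 : Fin n → ℝ)) : Measure (Fin n → ℝ) :=
  volume.withDensity (fun t => ((Real.toNNReal (φ.normed volume t)) : ℝ≥0∞))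

theorem mbMeas_density_meas (φ : ContDiffBump (0 : Fin n → ℝ)) :
    Measurable (fun t => Real.toNNReal (φ.normed volume t)) :=
  (φ.contDiff_normed (n := 0)).continuous.measurable.real_toNNReal

instance mbMeas_prob (φ : ContDiffBump (0 : Fin n → ℝ)) :
    IsProbabilityMeasure (mbMeas φ) := by
  constructor
  rw [mbMeas, withDensity_apply _ MeasurableSet.univ, setLIntegral_univ]
  have h1 : (fun t => ((Real.toNNReal (φ.normed volume t)) : ℝ≥0∞)) =
      fun t => ENNReal.ofReal (φ.normed volume t) := rfl
  rw [h1]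
  rw [← MeasureTheory.ofReal_integral_eq_lintegral_ofReal φ.integrable_normed
    (Eventually.of_forall φ.nonneg_normed)]
  rw [φ.integral_normed]
  simp

theorem mbMeas_integrable {X : Type*} [NormedAddCommGroup X] [NormedSpace ℝ X]
    (φ : ContDiffBump (0 : Fin n → ℝ)) (g : (Fin n → ℝ) → X) (hg : Continuous g) :
    Integrable g (mbMeas φ) := by
  rw [mbMeas, integrable_withDensity_iff_integrable_smul (mbMeas_density_meas φ)]
  have heq : (fun t => (Real.toNNReal (φ.normed volume t)) • g t) =
      fun t => (φ.normed volume t) • g t := by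
    funext t
    rw [NNReal.smul_def, Real.coe_toNNReal _ (φ.nonneg_normed t)]
  rw [heq]
  apply Continuous.integrable_of_hasCompactSupport
  · exact ((φ.contDiff_normed (n := 0)).continuous).smul hg
  · exact φ.hasCompactSupport_normed.smul_right

theorem mbConv_eq (φ : ContDiffBump (0 : Fin n → ℝ)) (F : (Fin n → ℝ) → (Fin n → ℝ))
    (hF : Continuous F) (x : Fin n → ℝ) :
    (φ.normed volume ⋆[ContinuousLinearMap.lsmul ℝ ℝ, volume] F) x =
      ∫ t, F (x - t) ∂(mbMeas φ) := by
  rw [mbMeas, integral_withDensity_eq_integral_smul (mbMeas_density_meas φ)]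
  rw [convolution_def]
  congr 1
  funext t
  rw [NNReal.smul_def, Real.coe_toNNReal _ (φ.nonneg_normed t)]
  simp [ContinuousLinearMap.lsmul_apply]

/-- Mollification preserves monotonicity. -/
theorem mbConv_mono (N : (Fin n → ℝ) → ℝ) (P : (Fin n → ℝ) → (Fin n → ℝ) → ℝ)
    (P_subadd : ∀ x₁ x₂ y, P (x₁ + x₂) y ≤ P x₁ y + P x₂ y)
    (P_cont : ∀ y, Continuous fun x => P x y)
    (P_homog : ∀ α : ℝ, 0 ≤ α → ∀ x y,
      P (α • x) y = α * P x y ∧ P x (α • y) = α * P x y)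
    (φ : ContDiffBump (0 : Fin n → ℝ)) (F : (Fin n → ℝ) → (Fin n → ℝ)) (hF : Continuous F)
    (hmono : ∀ x y, 0 ≤ -P (-(F x - F y)) (x - y)) (x y : Fin n → ℝ) :
    0 ≤ -P (-((φ.normed volume ⋆[ContinuousLinearMap.lsmul ℝ ℝ, volume] F) x -
        (φ.normed volume ⋆[ContinuousLinearMap.lsmul ℝ ℝ, volume] F) y)) (x - y) := by
  set u := x - y with hu
  set h : (Fin n → ℝ) → (Fin n → ℝ) := fun t => -(F (x - t) - F (y - t)) with hh
  have hhcont : Continuous h := by fun_prop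
  have hint : Integrable h (mbMeas φ) := mbMeas_integrable φ h hhcont
  have hgint : Integrable (fun t => P (h t) u) (mbMeas φ) :=
    mbMeas_integrable φ _ ((P_cont u).comp hhcont)
  -- the convolution difference equals the integral of h
  have hFx := mbMeas_integrable φ (fun t => F (x - t)) (by fun_prop)
  have hFy := mbMeas_integrable φ (fun t => F (y - t)) (by fun_prop)
  have hdiff : -((φ.normed volume ⋆[ContinuousLinearMap.lsmul ℝ ℝ, volume] F) x -
      (φ.normed volume ⋆[ContinuousLinearMap.lsmul ℝ ℝ, volume] F) y) = ∫ t, h t ∂(mbMeas φ) := by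
    rw [mbConv_eq φ F hF x, mbConv_eq φ F hF y, hh]
    rw [integral_neg, integral_sub hFx hFy]
  -- convexity of P · u
  have hconv : ConvexOn ℝ Set.univ (fun v => P v u) := by
    refine ⟨convex_univ, fun a _ b _ la lb hla hlb hab => ?_⟩
    calc P (la • a + lb • b) u ≤ P (la • a) u + P (lb • b) u := P_subadd _ _ _
      _ = la * P a u + lb * P b u := by
          rw [(P_homog la hla a u).1, (P_homog lb hlb b u).1]
      _ = la • P a u + lb • P b u := rfl
  have hjensen : P (∫ t, h t ∂(mbMeas φ)) u ≤ ∫ t, P (h t) u ∂(mbMeas φ) := by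
    exact hconv.map_integral_le (P_cont u).continuousOn isClosed_univ
      (Eventually.of_forall fun t => Set.mem_univ _) hint hgint
  have hptwise : ∀ t, P (h t) u ≤ 0 := by
    intro t
    have := hmono (x - t) (y - t)
    have heq : (x - t) - (y - t) = u := by rw [hu]; abel
    rw [heq] at this
    linarith
  have hintle : ∫ t, P (h t) u ∂(mbMeas φ) ≤ 0 :=
    integral_nonpos (fun t => hptwise t)
  rw [hdiff]
  linarith [le_trans hjensen hintle]

end Mollify

/-- Non-Euclidean Minty–Browder theorem: if `F` is continuous and monotone
w.r.t. a norm `N` with compatible weak pairing `P`, then for every `α > 0` the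
map `Id + αF` is a bijection (so the resolvent has full domain). -/
theorem minty_browder {n : ℕ} (hn : 0 < n)
    (N : (Fin n → ℝ) → ℝ)
    (N_add : ∀ x y, N (x + y) ≤ N x + N y)
    (N_smul : ∀ (c : ℝ) x, N (c • x) = |c| * N x)
    (N_pos : ∀ x, x ≠ 0 → 0 < N x)
    (P : (Fin n → ℝ) → (Fin n → ℝ) → ℝ)
    (P_subadd : ∀ x₁ x₂ y, P (x₁ + x₂) y ≤ P x₁ y + P x₂ y)
    (P_cont : ∀ y, Continuous fun x => P x y)
    (P_homog : ∀ α : ℝ, 0 ≤ α → ∀ x y,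
      P (α • x) y = α * P x y ∧ P x (α • y) = α * P x y)
    (P_neg : ∀ x y, P (-x) (-y) = P x y)
    (P_compat : ∀ x, P x x = N x ^ 2)
    (P_cs : ∀ x y, |P x y| ≤ N x * N y)
    (P_deimling : ∀ x y, ∀ D : ℝ,
      Filter.Tendsto (fun h : ℝ => (N (y + h • x) - N y) / h)
        (nhdsWithin 0 (Set.Ioi 0)) (nhds D) → P x y ≤ N y * D)
    (F : (Fin n → ℝ) → (Fin n → ℝ)) (hFcont : Continuous F)
    (hFmono : ∀ x y, 0 ≤ -P (-(F x - F y)) (x - y)) :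
    ∀ α : ℝ, 0 < α → Function.Bijective (fun x => x + α • F x) := by
  intro α hα
  obtain ⟨C, hC, hup⟩ := mb_N_upper N N_add N_smul
  obtain ⟨c, hc, hlow⟩ := mb_N_lower N hn N_add N_smul N_pos
  set G : (Fin n → ℝ) → (Fin n → ℝ) := fun x => x + α • F x with hGdef
  have hGexp : ∀ x y, N (x - y) ≤ N (G x - G y) := fun x y =>
    mb_expansive N P N_add N_smul P_subadd P_homog P_compat P_cs F hFmono α hα.le x y
  constructor
  · -- injectivity
    intro x y hxy
    have h1 : N (x - y) ≤ N (G x - G y) := hGexp x y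
    have h2 : G x = G y := hxy
    rw [h2, sub_self, mb_N_zero N N_smul] at h1
    by_contra hne
    have : x - y ≠ 0 := sub_ne_zero.2 hne
    exact absurd h1 (not_le.2 (N_pos _ this))
  · -- surjectivity
    intro z
    -- the bump functions
    set φk : ℕ → ContDiffBump (0 : Fin n → ℝ) := fun k =>
      ⟨((k:ℝ)+1)⁻¹/2, ((k:ℝ)+1)⁻¹, by positivity, half_lt_self (by positivity)⟩ with hφkdef
    set Fk : ℕ → (Fin n → ℝ) → (Fin n → ℝ) := fun k =>
      ((φk k).normed volume ⋆[ContinuousLinearMap.lsmul ℝ ℝ, volume] F) with hFkdef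
    have hFksmooth : ∀ k, ContDiff ℝ 1 (Fk k) := fun k =>
      (φk k).hasCompactSupport_normed.contDiff_convolution_left _
        (φk k).contDiff_normed hFcont.locallyIntegrable
    have hFkmono : ∀ k x y, 0 ≤ -P (-(Fk k x - Fk k y)) (x - y) := fun k =>
      mbConv_mono N P P_subadd P_cont P_homog (φk k) F hFcont hFmono
    set Gk : ℕ → (Fin n → ℝ) → (Fin n → ℝ) := fun k x => x + α • Fk k x with hGkdef
    have hGksmooth : ∀ k, ContDiff ℝ 1 (Gk k) := fun k =>
      contDiff_id.add ((hFksmooth k).const_smul α)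
    have hGkexp : ∀ k x y, N (x - y) ≤ N (Gk k x - Gk k y) := fun k x y =>
      mb_expansive N P N_add N_smul P_subadd P_homog P_compat P_cs (Fk k)
        (hFkmono k) α hα.le x y
    have hGksurj : ∀ k, Function.Surjective (Gk k) := fun k =>
      mb_surj_smooth N N_add N_smul N_pos c C hc hC hlow hup (Gk k)
        (hGksmooth k) (hGkexp k)
    -- pick solutions
    have hex : ∀ k, ∃ x, Gk k x = z := fun k => hGksurj k z
    choose xs hxs using hex
    -- bound on Fk k 0
    obtain ⟨M, hM⟩ := (isCompact_closedBall (0 : Fin n → ℝ) 1).exists_bound_of_continuousOn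
      ((hFcont.sub continuous_const).continuousOn)
    have hrOut_le_one : ∀ k : ℕ, (φk k).rOut ≤ 1 := by
      intro k
      show ((k:ℝ)+1)⁻¹ ≤ 1
      rw [inv_le_one_iff₀]
      right; push_cast; linarith [Nat.cast_nonneg (α := ℝ) k]
    have hFk0 : ∀ k, dist (Fk k 0) (F 0) ≤ M := by
      intro k
      apply (φk k).dist_normed_convolution_le hFcont.aestronglyMeasurable
      intro y hy
      have h1 : ‖y‖ < (φk k).rOut := by simpa [mem_ball, dist_eq_norm] using hy
      have h2 : y ∈ closedBall (0 : Fin n → ℝ) 1 := by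
        rw [mem_closedBall, dist_eq_norm, sub_zero]
        exact le_trans h1.le (hrOut_le_one k)
      rw [dist_eq_norm]
      exact hM y h2
    -- bound on solutions
    set R : ℝ := (C / c) * (‖z‖ + α * (‖F 0‖ + M)) with hRdef
    have hxsbound : ∀ k, xs k ∈ closedBall (0 : Fin n → ℝ) R := by
      intro k
      have h1 : N (xs k - 0) ≤ N (Gk k (xs k) - Gk k 0) := hGkexp k (xs k) 0
      have h2 : Gk k (xs k) = z := hxs k
      have h3 : Gk k 0 = α • Fk k 0 := by simp [hGkdef]
      rw [h2, h3, sub_zero] at h1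
      have h4 : N (z - α • Fk k 0) ≤ C * ‖z - α • Fk k 0‖ := hup _
      have h5 : ‖z - α • Fk k 0‖ ≤ ‖z‖ + α * ‖Fk k 0‖ := by
        calc ‖z - α • Fk k 0‖ ≤ ‖z‖ + ‖α • Fk k 0‖ := norm_sub_le _ _
          _ = ‖z‖ + |α| * ‖Fk k 0‖ := by rw [norm_smul, Real.norm_eq_abs]
          _ = ‖z‖ + α * ‖Fk k 0‖ := by rw [abs_of_pos hα]
      have h6 : ‖Fk k 0‖ ≤ ‖F 0‖ + M := by
        calc ‖Fk k 0‖ = ‖F 0 + (Fk k 0 - F 0)‖ := by congr 1; abel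
          _ ≤ ‖F 0‖ + ‖Fk k 0 - F 0‖ := norm_add_le _ _
          _ = ‖F 0‖ + dist (Fk k 0) (F 0) := by rw [dist_eq_norm]
          _ ≤ ‖F 0‖ + M := by linarith [hFk0 k]
      have h7 : c * ‖xs k‖ ≤ N (xs k) := hlow _
      rw [mem_closedBall, dist_eq_norm, sub_zero]
      have h8 : N (xs k) ≤ C * (‖z‖ + α * (‖F 0‖ + M)) := by
        have e6 : α * ‖Fk k 0‖ ≤ α * (‖F 0‖ + M) :=
          mul_le_mul_of_nonneg_left h6 hα.le
        have e5 : ‖z - α • Fk k 0‖ ≤ ‖z‖ + α * (‖F 0‖ + M) := by linarith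
        have e4 : C * ‖z - α • Fk k 0‖ ≤ C * (‖z‖ + α * (‖F 0‖ + M)) :=
          mul_le_mul_of_nonneg_left e5 hC.le
        linarith
      rw [hRdef, div_mul_eq_mul_div, le_div_iff₀ hc]
      nlinarith
    -- convergent subsequence
    obtain ⟨a, -, ψ, hψmono, hψconv⟩ := tendsto_subseq_of_bounded
      (isBounded_closedBall (x := (0 : Fin n → ℝ)) (r := R)) hxsbound
    -- Fk (ψ j) (xs (ψ j)) → F a
    have hd2 : Tendsto (fun j => dist (F (xs (ψ j))) (F a)) atTop (nhds 0) := by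
      apply tendsto_iff_dist_tendsto_zero.1
      exact (hFcont.continuousAt.tendsto).comp hψconv
    have hRR : (0:ℝ) ≤ R := by
      have := hxsbound 0
      rw [mem_closedBall] at this
      linarith [dist_nonneg (x := xs 0) (y := (0 : Fin n → ℝ))]
    have hd1 : Tendsto (fun j => dist (Fk (ψ j) (xs (ψ j))) (F (xs (ψ j)))) atTop (nhds 0) := by
      have hucont := (isCompact_closedBall (0 : Fin n → ℝ) (R+1)).uniformContinuousOn_of_continuous
        hFcont.continuousOn
      rw [Metric.uniformContinuousOn_iff] at hucont
      rw [NormedAddCommGroup.tendsto_nhds_zero]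
      intro ε hε
      obtain ⟨δ, hδ, hδF⟩ := hucont (ε/2) (by positivity)
      obtain ⟨j₀, hj₀⟩ := exists_nat_one_div_lt (show (0:ℝ) < min δ 1 by positivity)
      rw [eventually_atTop]
      refine ⟨j₀, fun j hj => ?_⟩
      have hrOut : (φk (ψ j)).rOut < min δ 1 := by
        show ((ψ j : ℝ)+1)⁻¹ < min δ 1
        have h1 : (j₀ : ℝ) + 1 ≤ (ψ j : ℝ) + 1 := by
          have : (j₀ : ℕ) ≤ ψ j := le_trans hj (hψmono.le_apply)
          push_cast; exact_mod_cast by linarith [this]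
        calc ((ψ j : ℝ)+1)⁻¹ ≤ ((j₀:ℝ)+1)⁻¹ := by
              apply inv_anti₀ (by positivity) h1
          _ = 1/((j₀:ℝ)+1) := by rw [one_div]
          _ < min δ 1 := hj₀
      have hdist : dist (Fk (ψ j) (xs (ψ j))) (F (xs (ψ j))) ≤ ε/2 := by
        apply (φk (ψ j)).dist_normed_convolution_le hFcont.aestronglyMeasurable
        intro y hy
        have hxmem : xs (ψ j) ∈ closedBall (0 : Fin n → ℝ) (R+1) := by
          have := hxsbound (ψ j)
          rw [mem_closedBall] at this ⊢
          linarith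
        have hymem : y ∈ closedBall (0 : Fin n → ℝ) (R+1) := by
          rw [mem_closedBall]
          have h1 : dist y (xs (ψ j)) < (φk (ψ j)).rOut := hy
          have h2 := hxsbound (ψ j)
          rw [mem_closedBall] at h2
          calc dist y 0 ≤ dist y (xs (ψ j)) + dist (xs (ψ j)) 0 := dist_triangle _ _ _
            _ ≤ (φk (ψ j)).rOut + R := by linarith
            _ ≤ 1 + R := by linarith [le_of_lt (lt_of_lt_of_le hrOut (min_le_right δ 1))]
            _ = R + 1 := by ring
        have h3 : dist y (xs (ψ j)) < δ :=
          lt_of_lt_of_le (lt_trans hy hrOut) (min_le_left δ 1)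
        exact le_of_lt (hδF y hymem (xs (ψ j)) hxmem h3)
      have : ‖dist (Fk (ψ j) (xs (ψ j))) (F (xs (ψ j)))‖ =
          dist (Fk (ψ j) (xs (ψ j))) (F (xs (ψ j))) := by
        rw [Real.norm_eq_abs, abs_of_nonneg dist_nonneg]
      rw [this]
      linarith
    have hFa : Tendsto (fun j => Fk (ψ j) (xs (ψ j))) atTop (nhds (F a)) := by
      apply tendsto_iff_dist_tendsto_zero.2
      apply squeeze_zero (fun j => dist_nonneg)
        (fun j => dist_triangle (Fk (ψ j) (xs (ψ j))) (F (xs (ψ j))) (F a))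
      have := hd1.add hd2
      simpa using this
    -- conclude
    have hfull : Tendsto (fun j => xs (ψ j) + α • Fk (ψ j) (xs (ψ j))) atTop
        (nhds (a + α • F a)) := hψconv.add (hFa.const_smul α)
    have hconst : (fun j => xs (ψ j) + α • Fk (ψ j) (xs (ψ j))) = fun _ => z := by
      funext j; exact hxs (ψ j)
    rw [hconst] at hfull
    have : a + α • F a = z := (tendsto_nhds_unique tendsto_const_nhds hfull).symm
    exact ⟨a, this⟩
end

section
/- If F : ℝ^n → ℝ^n is continuously differentiable, Lipschitz with constant ℓ, and monotone with parameter c ≥ 0 w.r.t. a norm ‖·‖ (i.e., −μ(−DF(x)) ≥ c for all x), then the forward step operator S_{αF} = Id − αF satisfies Lip(S_{αF}) ≤ e^{−αc} + e^{αℓ} − 1 − αℓ for every α > 0. -/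
open Filter Real

lemma aux_pow_bound {R : Type*} [NormedRing R] (h1 : ‖(1:R)‖ ≤ 1)
    (b : R) (β : ℝ) (hb : ‖b‖ ≤ β) (hβ : 0 ≤ β) :
    ∀ n : ℕ, ‖(1+b)^n - (1 + n • b)‖ ≤ (1+β)^n - 1 - n*β := by
  intro n
  induction n with
  | zero => simp
  | succ n ih =>
    have key : (1+b)^(n+1) - (1 + (n+1) • b)
        = (1+b) * ((1+b)^n - (1 + n • b)) + n • (b*b) := by
      rw [pow_succ', succ_nsmul, mul_sub, mul_add, mul_one, mul_smul_comm,
        show ((1:R)+b)*b = b + b*b by rw [add_mul, one_mul], smul_add, add_mul, one_mul]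
      abel
    have h1b : ‖1+b‖ ≤ 1+β := le_trans (norm_add_le _ _) (by linarith)
    have hbb : ‖b*b‖ ≤ β*β := le_trans (norm_mul_le _ _)
      (mul_le_mul hb hb (norm_nonneg _) hβ)
    have hns : ‖(n:ℕ) • (b*b)‖ ≤ n*(β*β) := le_trans norm_nsmul_le
      (by exact mul_le_mul_of_nonneg_left hbb (Nat.cast_nonneg n))
    calc ‖(1+b)^(n+1) - (1 + (n+1) • b)‖
        = ‖(1+b) * ((1+b)^n - (1 + n • b)) + n • (b*b)‖ := by rw [key]
      _ ≤ ‖1+b‖ * ‖(1+b)^n - (1 + n • b)‖ + ‖(n:ℕ) • (b*b)‖ :=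
          le_trans (norm_add_le _ _) (by gcongr; exact norm_mul_le _ _)
      _ ≤ (1+β) * ((1+β)^n - 1 - n*β) + n*(β*β) := by
          refine add_le_add (mul_le_mul h1b ih (norm_nonneg _) (by linarith)) hns
      _ = (1+β)^(n+1) - 1 - ((n+1:ℕ):ℝ)*β := by push_cast; ring

lemma key_op {E : Type*} [NormedAddCommGroup E] [NormedSpace ℝ E]
    (B : E →L[ℝ] E) (μ ℓ α : ℝ) (hℓ : 0 ≤ ℓ) (hB : ‖B‖ ≤ ℓ) (hα : 0 < α)
    (hμ : Tendsto (fun h : ℝ => (‖(1:E→L[ℝ]E) + h • B‖ - 1)/h) (nhdsWithin 0 (Set.Ioi 0)) (nhds μ)) :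
    ‖(1:E→L[ℝ]E) + α • B‖ ≤ Real.exp (α*μ) + (Real.exp (α*ℓ) - 1 - α*ℓ) := by
  have h1 : ‖(1:E→L[ℝ]E)‖ ≤ 1 := by
    rw [ContinuousLinearMap.one_def]; exact ContinuousLinearMap.norm_id_le
  have main : ∀ ε > (0:ℝ), ‖(1:E→L[ℝ]E) + α • B‖ ≤ Real.exp (α*(μ+ε)) + (Real.exp (α*ℓ) - 1 - α*ℓ) := by
    intro ε hε
    have hev : ∀ᶠ h in nhdsWithin (0:ℝ) (Set.Ioi 0),
        (‖(1:E→L[ℝ]E) + h • B‖ - 1)/h < μ + ε :=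
      hμ.eventually_lt_const (by linarith)
    rw [eventually_nhdsWithin_iff] at hev
    obtain ⟨δ, hδ, hP⟩ := Metric.eventually_nhds_iff.mp hev
    obtain ⟨n, hn⟩ := exists_nat_gt (α/δ)
    have hn0 : 0 < (n:ℝ) := lt_trans (div_pos hα hδ) hn
    have hnn : 0 < n := by exact_mod_cast hn0
    set h : ℝ := α / n with hhdef
    have hh0 : 0 < h := div_pos hα hn0
    have hnh : (n:ℝ) * h = α := by rw [hhdef]; field_simp [hn0.ne']
    have hhδ : h < δ := by
      rw [hhdef, div_lt_iff₀ hn0]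
      rw [div_lt_iff₀ hδ] at hn
      linarith [hn]
    have hbnd : ‖(1:E→L[ℝ]E) + h • B‖ ≤ 1 + h*(μ+ε) := by
      have := hP (show dist h 0 < δ by simpa [Real.dist_eq, abs_of_pos hh0]) hh0
      rw [div_lt_iff₀ hh0] at this
      nlinarith [this]
    have hbβ : ‖h • B‖ ≤ h*ℓ := by
      have hns := norm_smul h B
      rw [Real.norm_eq_abs, abs_of_pos hh0] at hns
      rw [hns]
      exact mul_le_mul_of_nonneg_left hB hh0.le
    have key := aux_pow_bound h1 (h • B) (h*ℓ) hbβ (by positivity) n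
    have hsm : (n:ℕ) • (h • B) = α • B := by
      rw [← Nat.cast_smul_eq_nsmul ℝ, smul_smul, hnh]
    have e1 : ‖(1:E→L[ℝ]E) + α • B‖
        ≤ ‖((1:E→L[ℝ]E)+h • B)^n‖ + ‖((1:E→L[ℝ]E)+h • B)^n - (1 + (n:ℕ) • (h • B))‖ := by
      have : (1:E→L[ℝ]E) + α • B
          = ((1:E→L[ℝ]E)+h • B)^n - (((1:E→L[ℝ]E)+h • B)^n - (1 + (n:ℕ) • (h • B))) := by
        rw [hsm]; abel
      rw [this]; exact norm_sub_le _ _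
    have e2 : ‖((1:E→L[ℝ]E)+h • B)^n‖ ≤ Real.exp (α*(μ+ε)) := by
      calc ‖((1:E→L[ℝ]E)+h • B)^n‖ ≤ ‖(1:E→L[ℝ]E)+h • B‖^n := norm_pow_le' _ hnn
        _ ≤ (1 + h*(μ+ε))^n := pow_le_pow_left₀ (norm_nonneg _) hbnd n
        _ ≤ (Real.exp (h*(μ+ε)))^n := by
            refine pow_le_pow_left₀ (le_trans (norm_nonneg _) hbnd) ?_ n
            linarith [Real.add_one_le_exp (h*(μ+ε))]
        _ = Real.exp ((n:ℝ)*(h*(μ+ε))) := (Real.exp_nat_mul _ n).symm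
        _ = Real.exp (α*(μ+ε)) := by rw [← mul_assoc, hnh]
    have e3 : (1+h*ℓ)^n - 1 - (n:ℝ)*(h*ℓ) ≤ Real.exp (α*ℓ) - 1 - α*ℓ := by
      have : (1+h*ℓ)^n ≤ Real.exp (α*ℓ) := by
        calc (1+h*ℓ)^n ≤ (Real.exp (h*ℓ))^n := by
              refine pow_le_pow_left₀ (by positivity) ?_ n
              linarith [Real.add_one_le_exp (h*ℓ)]
          _ = Real.exp ((n:ℝ)*(h*ℓ)) := (Real.exp_nat_mul _ n).symm
          _ = Real.exp (α*ℓ) := by rw [← mul_assoc, hnh]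
      have h2 : (n:ℝ)*(h*ℓ) = α*ℓ := by rw [← mul_assoc, hnh]
      linarith
    linarith [e1, e2, le_trans key e3]
  have htend : Tendsto (fun ε : ℝ => Real.exp (α*(μ+ε)) + (Real.exp (α*ℓ) - 1 - α*ℓ))
      (nhdsWithin 0 (Set.Ioi 0)) (nhds (Real.exp (α*μ) + (Real.exp (α*ℓ) - 1 - α*ℓ))) := by
    have hc : Continuous (fun ε : ℝ => Real.exp (α*(μ+ε)) + (Real.exp (α*ℓ) - 1 - α*ℓ)) := by
      continuity
    have := (hc.tendsto 0).mono_left (nhdsWithin_le_nhds (s := Set.Ioi (0:ℝ)))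
    simpa using this
  exact ge_of_tendsto htend (eventually_mem_nhdsWithin.mono (fun ε hε => main ε hε))

/-- If `F` is `C¹`, Lipschitz with constant `ℓ`, and monotone with parameter
`c ≥ 0` (i.e. `−μ(−DF(x)) ≥ c` for all `x`), then the forward step operator
`Id − αF` has Lipschitz constant at most `e^{−αc} + e^{αℓ} − 1 − αℓ`. -/
theorem forward_step_lipschitz_general_norm
    {E : Type*} [NormedAddCommGroup E] [NormedSpace ℝ E] [FiniteDimensional ℝ E]
    (F : E → E) (hF : ContDiff ℝ 1 F) (ℓ c : ℝ) (hc : 0 ≤ c)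
    (hLip : ∀ x, ‖fderiv ℝ F x‖ ≤ ℓ)
    (μm : E → ℝ)
    (hμm : ∀ x, Filter.Tendsto
      (fun h : ℝ => (‖(1 : E →L[ℝ] E) + h • (-(fderiv ℝ F x))‖ - 1) / h)
      (nhdsWithin 0 (Set.Ioi 0)) (nhds (μm x)))
    (hmono : ∀ x, c ≤ -μm x) :
    ∀ α : ℝ, 0 < α → ∀ x y : E,
      ‖(x - α • F x) - (y - α • F y)‖ ≤
        (Real.exp (-(α * c)) + Real.exp (α * ℓ) - 1 - α * ℓ) * ‖x - y‖ := by
  intro α hα x y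
  have hℓ0 : 0 ≤ ℓ := le_trans (norm_nonneg _) (hLip 0)
  have hd : Differentiable ℝ F := hF.differentiable one_ne_zero
  set G : E → E := fun z => z - α • F z with hGdef
  have hGd : ∀ z, HasFDerivAt G ((1:E→L[ℝ]E) + α • (-(fderiv ℝ F z))) z := by
    intro z
    have h1 : HasFDerivAt (fun z : E => z) (1:E→L[ℝ]E) z := by
      rw [ContinuousLinearMap.one_def]; exact hasFDerivAt_id z
    have h2 : HasFDerivAt (fun z => α • F z) (α • fderiv ℝ F z) z :=
      ((hd z).hasFDerivAt).const_smul α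
    have h3 := h1.sub h2
    have : (1:E→L[ℝ]E) - α • fderiv ℝ F z = 1 + α • (-(fderiv ℝ F z)) := by
      rw [smul_neg, sub_eq_add_neg]
    rwa [← this]
  have bound : ∀ z, ‖fderiv ℝ G z‖ ≤ Real.exp (-(α * c)) + Real.exp (α * ℓ) - 1 - α * ℓ := by
    intro z
    rw [(hGd z).fderiv]
    have hB : ‖-(fderiv ℝ F z)‖ ≤ ℓ := by rw [norm_neg]; exact hLip z
    have := key_op (-(fderiv ℝ F z)) (μm z) ℓ α hℓ0 hB hα (hμm z)
    have hmz : α * μm z ≤ -(α * c) := by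
      have := hmono z
      nlinarith
    have := le_trans this (by
      have := Real.exp_le_exp.mpr hmz
      linarith : Real.exp (α * μm z) + (Real.exp (α*ℓ) - 1 - α*ℓ)
        ≤ Real.exp (-(α * c)) + (Real.exp (α*ℓ) - 1 - α*ℓ))
    linarith
  have := Convex.norm_image_sub_le_of_norm_fderiv_le
    (fun z _ => (hGd z).differentiableAt) (fun z (_ : z ∈ Set.univ) => bound z)
    convex_univ (Set.mem_univ y) (Set.mem_univ x)
  simpa [hGdef] using this
end

section
/- If F : ℝ^n → ℝ^n is continuously differentiable and monotone with parameter c ≥ 0 w.r.t. the ℓ∞ norm (i.e., −μ_∞(−DF(x)) ≥ c for all x), and α ∈ (0, 1/d] where d := sup_x max_i (DF(x))_{ii} > 0, then ‖I_n − αDF(x)‖_∞ ≤ 1 − αc for all x; hence Lip_∞(Id − αF) ≤ 1 − αc. -/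
/-- If `F` is `C¹` and monotone with parameter `c ≥ 0` w.r.t. the ℓ∞ norm
(`−μ_∞(−DF(x)) ≥ c`), and `α ∈ (0, 1/d]` with `d ≥ sup_x max_i (DF(x))_{ii}`,
`d > 0`, then `‖I − αDF(x)‖_∞ ≤ 1 − αc` for all `x`, and hence
`Id − αF` is `(1 − αc)`-Lipschitz in the ℓ∞ norm. -/
theorem forward_step_lipschitz_linf {n : ℕ} (hn : 0 < n)
    (F : (Fin n → ℝ) → (Fin n → ℝ)) (hF : ContDiff ℝ 1 F)
    (J : (Fin n → ℝ) → Fin n → Fin n → ℝ)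
    (hJ : ∀ x i j, J x i j = fderiv ℝ F x (Pi.single j 1) i)
    (c : ℝ) (hc : 0 ≤ c)
    (hmono : ∀ x, (⨆ i : Fin n,
      (-(J x i i) + ∑ j ∈ Finset.univ.erase i, |J x i j|)) ≤ -c)
    (d : ℝ) (hd : 0 < d) (hdiag : ∀ x i, J x i i ≤ d)
    (α : ℝ) (hα : 0 < α) (hαd : α ≤ 1 / d) :
    (∀ x, (⨆ i : Fin n,
        ∑ j, |(if i = j then (1 : ℝ) else 0) - α * J x i j|) ≤ 1 - α * c) ∧
    (∀ x y : Fin n → ℝ,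
      ‖(x - α • F x) - (y - α • F y)‖ ≤ (1 - α * c) * ‖x - y‖) := by
  have hne : Nonempty (Fin n) := ⟨⟨0, hn⟩⟩
  have hαd1 : α * d ≤ 1 := by
    rw [← div_mul_cancel₀ (1:ℝ) hd.ne']
    exact mul_le_mul_of_nonneg_right hαd hd.le
  -- per-index monotonicity bound
  have hmono' : ∀ x i,
      -(J x i i) + ∑ j ∈ Finset.univ.erase i, |J x i j| ≤ -c := fun x i =>
    le_trans (le_ciSup
      (f := fun i => -(J x i i) + ∑ j ∈ Finset.univ.erase i, |J x i j|)
      (Set.Finite.bddAbove (Set.finite_range _)) i) (hmono x)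
  -- row sum bound
  have hrow : ∀ x i,
      ∑ j, |(if i = j then (1 : ℝ) else 0) - α * J x i j| ≤ 1 - α * c := by
    intro x i
    have hsplit :
        ∑ j, |(if i = j then (1 : ℝ) else 0) - α * J x i j|
          = |1 - α * J x i i| + ∑ j ∈ Finset.univ.erase i, α * |J x i j| := by
      rw [← Finset.add_sum_erase Finset.univ _ (Finset.mem_univ i)]
      simp only [if_pos rfl]
      congr 1
      refine Finset.sum_congr rfl fun j hj => ?_
      rw [if_neg (Finset.ne_of_mem_erase hj).symm]
      rw [zero_sub, abs_neg, abs_mul, abs_of_pos hα]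
    have hdd : α * J x i i ≤ 1 :=
      le_trans (mul_le_mul_of_nonneg_left (hdiag x i) hα.le) hαd1
    have habs : |1 - α * J x i i| = 1 - α * J x i i := abs_of_nonneg (by linarith)
    rw [hsplit, habs, ← Finset.mul_sum]
    have := hmono' x i
    nlinarith [mul_le_mul_of_nonneg_left this hα.le]
  have hsup : ∀ x, (⨆ i : Fin n,
      ∑ j, |(if i = j then (1 : ℝ) else 0) - α * J x i j|) ≤ 1 - α * c :=
    fun x => ciSup_le (hrow x)
  refine ⟨hsup, ?_⟩
  -- Lipschitz part
  have hFd : Differentiable ℝ F := hF.differentiable one_ne_zero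
  have hGd : Differentiable ℝ (fun x : Fin n → ℝ => x - α • F x) :=
    differentiable_id.sub ((hFd).const_smul α)
  have key : ∀ x, ‖fderiv ℝ (fun x : Fin n → ℝ => x - α • F x) x‖ ≤ 1 - α * c := by
    intro x
    have hfd : fderiv ℝ (fun x : Fin n → ℝ => x - α • F x) x
        = ContinuousLinearMap.id ℝ (Fin n → ℝ) - α • fderiv ℝ F x := by
      rw [fderiv_fun_sub differentiableAt_fun_id ((hFd x).fun_const_smul α),
        fderiv_id', fderiv_fun_const_smul (hFd x)]
    have h1mac : (0:ℝ) ≤ 1 - α * c := by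
      have hcd : c ≤ d := by
        have := hmono' x ⟨0, hn⟩
        have hsum : (0:ℝ) ≤ ∑ j ∈ Finset.univ.erase (⟨0, hn⟩ : Fin n),
            |J x ⟨0, hn⟩ j| := Finset.sum_nonneg fun _ _ => abs_nonneg _
        have := hdiag x ⟨0, hn⟩
        linarith
      nlinarith
    rw [hfd]
    refine ContinuousLinearMap.opNorm_le_bound _ h1mac fun v => ?_
    have hderiv : ∀ i, (fderiv ℝ F x) v i = ∑ j, v j * J x i j := by
      intro i
      conv_lhs => rw [← Finset.univ_sum_single v]
      rw [map_sum, Finset.sum_apply]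
      refine Finset.sum_congr rfl fun j _ => ?_
      have : (Pi.single j (v j) : Fin n → ℝ) = v j • (Pi.single j 1 : Fin n → ℝ) := by
        ext k
        simp [Pi.single_apply, mul_ite]
      rw [this, map_smul, Pi.smul_apply, smul_eq_mul, hJ]
    rw [pi_norm_le_iff_of_nonneg (mul_nonneg h1mac (norm_nonneg v))]
    intro i
    have heval : ((ContinuousLinearMap.id ℝ (Fin n → ℝ) - α • fderiv ℝ F x) v) i
        = ∑ j, v j * ((if i = j then (1:ℝ) else 0) - α * J x i j) := by
      simp only [ContinuousLinearMap.sub_apply, ContinuousLinearMap.id_apply,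
        ContinuousLinearMap.smul_apply, Pi.sub_apply, Pi.smul_apply, smul_eq_mul]
      rw [hderiv i]
      rw [Finset.sum_congr rfl (fun j _ => mul_sub (v j) _ _)]
      rw [Finset.sum_sub_distrib]
      congr 1
      · simp [mul_ite]
      · rw [Finset.mul_sum]
        exact Finset.sum_congr rfl fun j _ => by ring
    rw [Real.norm_eq_abs, heval]
    calc |∑ j, v j * ((if i = j then (1:ℝ) else 0) - α * J x i j)|
        ≤ ∑ j, |v j * ((if i = j then (1:ℝ) else 0) - α * J x i j)| :=
          Finset.abs_sum_le_sum_abs _ _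
      _ ≤ ∑ j, ‖v‖ * |(if i = j then (1:ℝ) else 0) - α * J x i j| := by
          refine Finset.sum_le_sum fun j _ => ?_
          rw [abs_mul]
          exact mul_le_mul_of_nonneg_right (norm_le_pi_norm v j) (abs_nonneg _)
      _ = ‖v‖ * ∑ j, |(if i = j then (1:ℝ) else 0) - α * J x i j| := by
          rw [Finset.mul_sum]
      _ ≤ ‖v‖ * (1 - α * c) :=
          mul_le_mul_of_nonneg_left (hrow x i) (norm_nonneg v)
      _ = (1 - α * c) * ‖v‖ := mul_comm _ _
  intro x y
  have := Convex.norm_image_sub_le_of_norm_fderiv_le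
    (fun z _ => hGd z) (fun z _ => key z) convex_univ
    (Set.mem_univ y) (Set.mem_univ x)
  simpa using this
end

section
/- Lipschitz estimate for RNN equilibria: suppose for each u ∈ ℝ^m there is a unique x*_u ∈ ℝ^n with x*_u = Φ(Ax*_u + Bu + b), where Φ is componentwise nonexpansive and monotone (each component φ satisfies 0 ≤ (φ(s)−φ(t))/(s−t) ≤ 1), and μ_{∞,[η]^{−1}}(A) = γ < 1 for some η ∈ ℝ^n_{>0}. Then the map u ↦ x*_u is ℓ∞-Lipschitz with constant at most (η_max/η_min)·‖B‖_∞/(1 − γ). -/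
/-- Lipschitz estimate for RNN equilibria: if for each input `u` there is a
unique fixed point `X u = Φ(A (X u) + B u + b)` with `Φ` acting entrywise with
slopes in `[0, 1]`, and the weighted ℓ∞ logarithmic norm of `A` is `γ < 1`,
then `u ↦ X u` is ℓ∞-Lipschitz with constant `(η_max/η_min)·‖B‖_∞/(1 − γ)`. -/
theorem rnn_equilibrium_lipschitz {n m : ℕ} (hn : 0 < n) (hm : 0 < m)
    (A : Matrix (Fin n) (Fin n) ℝ) (B : Matrix (Fin n) (Fin m) ℝ)
    (b : Fin n → ℝ) (φ : ℝ → ℝ)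
    (hφ : ∀ s t : ℝ, s ≠ t → 0 ≤ (φ s - φ t) / (s - t) ∧ (φ s - φ t) / (s - t) ≤ 1)
    (η : Fin n → ℝ) (hη : ∀ i, 0 < η i) (γ : ℝ)
    (hγdef : (⨆ i : Fin n,
      (A i i + ∑ j ∈ Finset.univ.erase i, |A i j| * η j / η i)) = γ)
    (hγ : γ < 1)
    (X : (Fin m → ℝ) → (Fin n → ℝ))
    (hX : ∀ u, X u = fun i => φ ((A.mulVec (X u) + B.mulVec u + b) i))
    (hXuniq : ∀ u y, (y = fun i => φ ((A.mulVec y + B.mulVec u + b) i)) → y = X u) :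
    ∀ u v : Fin m → ℝ,
      ‖X u - X v‖ ≤
        ((⨆ i, η i) / (⨅ i, η i)) *
          (⨆ i : Fin n, ∑ j, |B i j|) / (1 - γ) * ‖u - v‖ := by
  intro u v
  have hne : Nonempty (Fin n) := ⟨⟨0, hn⟩⟩
  set x := X u with hx
  set y := X v with hy
  set s : Fin n → ℝ := fun i => (A.mulVec x + B.mulVec u + b) i with hs
  set t : Fin n → ℝ := fun i => (A.mulVec y + B.mulVec v + b) i with ht
  have hxf : ∀ i, x i = φ (s i) := by
    intro i; conv_lhs => rw [hx, hX u]
  have hyf : ∀ i, y i = φ (t i) := by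
    intro i; conv_lhs => rw [hy, hX v]
  set d : Fin n → ℝ :=
    fun i => if h : s i = t i then 0 else (φ (s i) - φ (t i)) / (s i - t i) with hd
  have hd0 : ∀ i, 0 ≤ d i := by
    intro i
    by_cases h : s i = t i
    · simp [hd, h]
    · simpa [hd, h] using (hφ (s i) (t i) h).1
  have hd1 : ∀ i, d i ≤ 1 := by
    intro i
    by_cases h : s i = t i
    · simp [hd, h]
    · simpa [hd, h] using (hφ (s i) (t i) h).2
  have hde : ∀ i, x i - y i = d i * (s i - t i) := by
    intro i
    by_cases h : s i = t i
    · simp [hd, h, hxf i, hyf i]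
    · rw [hxf i, hyf i]
      simp only [hd, h, dif_neg, not_false_iff]
      rw [div_mul_cancel₀]
      exact sub_ne_zero.mpr h
  set w : Fin n → ℝ := B.mulVec (u - v) with hw
  have hst : ∀ i, s i - t i = (∑ j, A i j * (x j - y j)) + w i := by
    intro i
    have h1 : w i = (B.mulVec u) i - (B.mulVec v) i := by
      rw [hw, Matrix.mulVec_sub]; rfl
    have h2 : (A.mulVec x) i - (A.mulVec y) i = ∑ j, A i j * (x j - y j) := by
      simp [Matrix.mulVec, dotProduct, mul_sub, Finset.sum_sub_distrib]
    simp only [hs, ht, Pi.add_apply]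
    linarith [h1, h2]
  -- row bound from γ
  have hAii : ∀ i, A i i ≤ γ := by
    intro i
    have h1 : A i i + ∑ j ∈ Finset.univ.erase i, |A i j| * η j / η i ≤ γ := by
      rw [← hγdef]
      exact le_ciSup (f := fun i => A i i + ∑ j ∈ Finset.univ.erase i, |A i j| * η j / η i)
        (Set.Finite.bddAbove (Set.finite_range _)) i
    have h2 : 0 ≤ ∑ j ∈ Finset.univ.erase i, |A i j| * η j / η i :=
      Finset.sum_nonneg fun j _ =>
        div_nonneg (mul_nonneg (abs_nonneg _) (hη j).le) (hη i).le
    linarith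
  have hrow : ∀ i, A i i * η i + ∑ j ∈ Finset.univ.erase i, |A i j| * η j ≤ γ * η i := by
    intro i
    have h1 : A i i + ∑ j ∈ Finset.univ.erase i, |A i j| * η j / η i ≤ γ := by
      rw [← hγdef]
      exact le_ciSup (f := fun i => A i i + ∑ j ∈ Finset.univ.erase i, |A i j| * η j / η i)
        (Set.Finite.bddAbove (Set.finite_range _)) i
    have h2 : (A i i + ∑ j ∈ Finset.univ.erase i, |A i j| * η j / η i) * η i ≤ γ * η i :=
      mul_le_mul_of_nonneg_right h1 (hη i).le
    have h3 : (∑ j ∈ Finset.univ.erase i, |A i j| * η j / η i) * η i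
        = ∑ j ∈ Finset.univ.erase i, |A i j| * η j := by
      rw [Finset.sum_mul]
      exact Finset.sum_congr rfl fun j _ => div_mul_cancel₀ _ (hη i).ne'
    nlinarith [h2, h3]
  -- maximizing index
  obtain ⟨i₀, -, hi₀⟩ := Finset.exists_max_image Finset.univ
    (fun i => |x i - y i| / η i) ⟨⟨0, hn⟩, Finset.mem_univ _⟩
  set M : ℝ := |x i₀ - y i₀| / η i₀ with hMdef
  have hM0 : 0 ≤ M := div_nonneg (abs_nonneg _) (hη i₀).le
  have hMη : ∀ j, |x j - y j| ≤ M * η j := by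
    intro j
    have := hi₀ j (Finset.mem_univ j)
    exact (div_le_iff₀ (hη j)).mp this
  have hMi : |x i₀ - y i₀| = M * η i₀ := (div_mul_cancel₀ _ (hη i₀).ne').symm
  -- key inequality
  have hkey : M * (1 - γ) * η i₀ ≤ |w i₀| := by
    rcases eq_or_lt_of_le (hd0 i₀) with hdi | hdi
    · -- d i₀ = 0
      have he0 : x i₀ - y i₀ = 0 := by rw [hde i₀, ← hdi, zero_mul]
      have : M = 0 := by rw [hMdef, he0, abs_zero, zero_div]
      rw [this]
      simpa using abs_nonneg (w i₀)
    · -- d i₀ > 0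
      set R : ℝ := ∑ j ∈ Finset.univ.erase i₀, A i₀ j * (x j - y j) with hR
      have he : x i₀ - y i₀ = d i₀ * (A i₀ i₀ * (x i₀ - y i₀) + (R + w i₀)) := by
        conv_lhs => rw [hde i₀, hst i₀, ← Finset.add_sum_erase Finset.univ
          (fun j => A i₀ j * (x j - y j)) (Finset.mem_univ i₀)]
        rw [← hR]
        ring
      have h1 : (1 - d i₀ * A i₀ i₀) * (x i₀ - y i₀) = d i₀ * (R + w i₀) := by
        linear_combination he
      have hdA : 0 ≤ 1 - d i₀ * A i₀ i₀ := by
        have hA1 : A i₀ i₀ < 1 := lt_of_le_of_lt (hAii i₀) hγ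
        nlinarith [mul_nonneg (hd0 i₀) (sub_pos.mpr hA1).le, hd1 i₀]
      have h2 : (1 - d i₀ * A i₀ i₀) * |x i₀ - y i₀| = d i₀ * |R + w i₀| := by
        have := congrArg abs h1
        rwa [abs_mul, abs_mul, abs_of_nonneg hdA, abs_of_nonneg (hd0 i₀)] at this
      have hRabs : |R| ≤ (γ * η i₀ - A i₀ i₀ * η i₀) * M := by
        have ha : |R| ≤ ∑ j ∈ Finset.univ.erase i₀, |A i₀ j| * (M * η j) := by
          rw [hR]
          refine (Finset.abs_sum_le_sum_abs _ _).trans (Finset.sum_le_sum fun j _ => ?_)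
          rw [abs_mul]
          exact mul_le_mul_of_nonneg_left (hMη j) (abs_nonneg _)
        have hb : ∑ j ∈ Finset.univ.erase i₀, |A i₀ j| * (M * η j)
            = (∑ j ∈ Finset.univ.erase i₀, |A i₀ j| * η j) * M := by
          rw [Finset.sum_mul]
          exact Finset.sum_congr rfl fun j _ => by ring
        have hc : (∑ j ∈ Finset.univ.erase i₀, |A i₀ j| * η j) * M
            ≤ (γ * η i₀ - A i₀ i₀ * η i₀) * M :=
          mul_le_mul_of_nonneg_right (by linarith [hrow i₀]) hM0
        calc |R| ≤ ∑ j ∈ Finset.univ.erase i₀, |A i₀ j| * (M * η j) := ha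
          _ = (∑ j ∈ Finset.univ.erase i₀, |A i₀ j| * η j) * M := hb
          _ ≤ (γ * η i₀ - A i₀ i₀ * η i₀) * M := hc
      have h3 : |R + w i₀| ≤ (γ * η i₀ - A i₀ i₀ * η i₀) * M + |w i₀| :=
        (abs_add_le _ _).trans (by linarith)
      have h4 : (1 - d i₀ * A i₀ i₀) * (M * η i₀)
          ≤ d i₀ * ((γ * η i₀ - A i₀ i₀ * η i₀) * M + |w i₀|) := by
        rw [← hMi, h2]
        exact mul_le_mul_of_nonneg_left h3 (hd0 i₀)
      have h6 : M * η i₀ ≤ d i₀ * γ * M * η i₀ + d i₀ * |w i₀| := by nlinarith [h4]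
      have h5 : d i₀ * (M * (1 - γ) * η i₀) ≤ d i₀ * |w i₀| := by
        nlinarith [h6, mul_nonneg (sub_nonneg.mpr (hd1 i₀)) (mul_nonneg hM0 (hη i₀).le)]
      exact le_of_mul_le_mul_left h5 hdi
  -- norms and sups
  set ηM : ℝ := ⨆ i, η i with hηM
  set ηm : ℝ := ⨅ i, η i with hηm
  set S : ℝ := ⨆ i : Fin n, ∑ j, |B i j| with hS
  have hηmax : ∀ j, η j ≤ ηM := fun j =>
    le_ciSup (Set.Finite.bddAbove (Set.finite_range _)) j
  have hηmin : ∀ j, ηm ≤ η j := fun j =>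
    ciInf_le (Set.Finite.bddBelow (Set.finite_range _)) j
  have hηmpos : 0 < ηm := by
    obtain ⟨k, -, hk⟩ := Finset.exists_min_image Finset.univ η ⟨⟨0, hn⟩, Finset.mem_univ _⟩
    have : η k ≤ ηm := le_ciInf fun j => hk j (Finset.mem_univ j)
    linarith [hη k]
  have hηMpos : 0 < ηM := lt_of_lt_of_le hηmpos (le_trans (hηmin ⟨0, hn⟩) (hηmax ⟨0, hn⟩))
  have hSle : ∀ i, (∑ j, |B i j|) ≤ S := fun i =>
    le_ciSup (f := fun i : Fin n => ∑ j, |B i j|)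
      (Set.Finite.bddAbove (Set.finite_range _)) i
  have hS0 : 0 ≤ S :=
    le_trans (Finset.sum_nonneg fun j _ => abs_nonneg (B ⟨0, hn⟩ j)) (hSle ⟨0, hn⟩)
  have hN0 : 0 ≤ ‖u - v‖ := norm_nonneg _
  have hwle : |w i₀| ≤ S * ‖u - v‖ := by
    have h1 : |w i₀| ≤ ∑ j, |B i₀ j| * |(u - v) j| := by
      rw [hw]
      calc |(B.mulVec (u - v)) i₀| = |∑ j, B i₀ j * (u - v) j| := by
            simp [Matrix.mulVec, dotProduct]
        _ ≤ ∑ j, |B i₀ j * (u - v) j| := Finset.abs_sum_le_sum_abs _ _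
        _ = ∑ j, |B i₀ j| * |(u - v) j| := by simp [abs_mul]
    have h2 : ∑ j, |B i₀ j| * |(u - v) j| ≤ ∑ j, |B i₀ j| * ‖u - v‖ :=
      Finset.sum_le_sum fun j _ => mul_le_mul_of_nonneg_left
        (by simpa [Real.norm_eq_abs] using norm_le_pi_norm (u - v) j) (abs_nonneg _)
    have h3 : ∑ j, |B i₀ j| * ‖u - v‖ = (∑ j, |B i₀ j|) * ‖u - v‖ :=
      (Finset.sum_mul _ _ _).symm
    calc |w i₀| ≤ ∑ j, |B i₀ j| * ‖u - v‖ := le_trans h1 h2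
      _ = (∑ j, |B i₀ j|) * ‖u - v‖ := h3
      _ ≤ S * ‖u - v‖ := mul_le_mul_of_nonneg_right (hSle i₀) hN0
  have h1γ : 0 < 1 - γ := by linarith
  have hMfin : M * ((1 - γ) * ηm) ≤ S * ‖u - v‖ := by
    nlinarith [hkey, hwle, hM0, hηmin i₀,
      mul_nonneg (mul_nonneg hM0 h1γ.le) (sub_nonneg.mpr (hηmin i₀))]
  -- conclude
  have hCeq : ηM / ηm * S / (1 - γ) * ‖u - v‖ = ηM * S * ‖u - v‖ / ((1 - γ) * ηm) := by
    simp only [div_eq_mul_inv, mul_inv]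
    ring
  rw [hCeq]
  have hfinal : ∀ j, ‖(X u - X v) j‖ ≤ ηM * S * ‖u - v‖ / ((1 - γ) * ηm) := by
    intro j
    have hEj : ‖(X u - X v) j‖ = |x j - y j| := by
      rw [Pi.sub_apply, Real.norm_eq_abs]
    rw [hEj, le_div_iff₀ (mul_pos h1γ hηmpos)]
    have step1 : |x j - y j| ≤ M * ηM :=
      le_trans (hMη j) (mul_le_mul_of_nonneg_left (hηmax j) hM0)
    have step2 : M * ηM * ((1 - γ) * ηm) ≤ ηM * S * ‖u - v‖ := by
      have h := mul_le_mul_of_nonneg_left hMfin hηMpos.le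
      linarith [h]
    have step3 : |x j - y j| * ((1 - γ) * ηm) ≤ M * ηM * ((1 - γ) * ηm) :=
      mul_le_mul_of_nonneg_right step1 (mul_pos h1γ hηmpos).le
    linarith [step2, step3]
  exact pi_norm_le_iff_of_nonneg (div_nonneg (mul_nonneg (mul_nonneg hηMpos.le hS0) hN0)
    (mul_pos h1γ hηmpos).le) |>.mpr hfinal
end
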